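/- arXiv:0809.2858 — 7 statements merged into one kernel-verified Lean document; each statement's English description precedes it below -/
import Mathlib

section
/- If G is a graph and H = G + {(u,v)} is obtained from G by adding or deleting a single edge (u,v), then the number of critical cliques of H is at most the number of critical cliques of G plus 4. -/
open SimpleGraph

/-- `K` is a clique which is a module of `G`. -/
def IsCliqueModule {V : Type*} (G : SimpleGraph V) (K : Set V) : Prop :=
  G.IsClique K ∧ ∀ x ∈ K, ∀ y ∈ K, ∀ z ∉ K, (G.Adj x z ↔ G.Adj y z)

/-- A critical clique of `G`: a maximal clique module. -/
def IsCriticalClique {V : Type*} (G : SimpleGraph V) (K : Set V) : Prop :=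
  K.Nonempty ∧ IsCliqueModule G K ∧ ∀ K', IsCliqueModule G K' → K ⊆ K' → K' = K

/-- The graph `G + F` obtained from `G` by toggling (adding or deleting) the pairs in `F`:
its edge set is the symmetric difference of `E(G)` and `F`. -/
def editGraph {V : Type*} (G : SimpleGraph V) (F : Set (Sym2 V)) : SimpleGraph V where
  Adj u v := u ≠ v ∧ ((G.Adj u v ∧ s(u, v) ∉ F) ∨ (¬ G.Adj u v ∧ s(u, v) ∈ F))
  symm := by
    constructor
    intro u v h
    refine ⟨h.1.symm, ?_⟩
    rw [Sym2.eq_swap]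
    rcases h.2 with ⟨h1, h2⟩ | ⟨h1, h2⟩
    · exact Or.inl ⟨h1.symm, h2⟩
    · exact Or.inr ⟨fun hh => h1 hh.symm, h2⟩
  loopless := ⟨fun u h => h.1 rfl⟩

/-!
Critical cliques are exactly the classes of true twins, i.e. of vertices with the same closed
neighbourhood, so their number is the number of distinct closed neighbourhoods. Toggling the pair
`uv` changes only the closed neighbourhoods of `u` and `v`, so it creates at most two new ones.
-/

open Set

theorem Set.ncard_range_le_of_eqOn_compl {α β : Type*} {f g : α → β} {S : Set α}
    (hfg : EqOn f g Sᶜ) (hS : S.Finite) (hg : (range g).Finite) :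
    (range f).ncard ≤ (range g).ncard + S.ncard := by
  have hsub : range f ⊆ f '' S ∪ range g := by
    rintro _ ⟨x, rfl⟩
    by_cases hx : x ∈ S
    · exact Or.inl (mem_image_of_mem f hx)
    · exact Or.inr ⟨x, (hfg hx).symm⟩
  calc (range f).ncard ≤ (f '' S ∪ range g).ncard := ncard_le_ncard hsub ((hS.image f).union hg)
    _ ≤ (f '' S).ncard + (range g).ncard := ncard_union_le _ _
    _ ≤ (range g).ncard + S.ncard := by linarith [ncard_image_le (f := f) hS]

namespace SimpleGraph

variable {V : Type*} (G : SimpleGraph V)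

def closedNbhd (x : V) : Set V := insert x (G.neighborSet x)

theorem mem_closedNbhd_iff {x z : V} : z ∈ G.closedNbhd x ↔ z = x ∨ G.Adj x z := Iff.rfl

theorem mem_closedNbhd_self (x : V) : x ∈ G.closedNbhd x := mem_insert x _

def trueTwinClass (x : V) : Set V := G.closedNbhd ⁻¹' {G.closedNbhd x}

theorem mem_trueTwinClass_self (x : V) : x ∈ G.trueTwinClass x := rfl

variable {G}

theorem _root_.IsCliqueModule.closedNbhd_eq {K : Set V} (hK : IsCliqueModule G K) {x y : V}
    (hx : x ∈ K) (hy : y ∈ K) : G.closedNbhd x = G.closedNbhd y := by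
  ext z
  simp only [mem_closedNbhd_iff]
  by_cases hz : z ∈ K
  · have adj_of_ne : ∀ w ∈ K, z ≠ w → G.Adj w z := fun w hw hzw => hK.1 hw hz hzw.symm
    by_cases hzx : z = x <;> by_cases hzy : z = y <;> simp_all
  · have hzx : z ≠ x := fun h => hz (h ▸ hx)
    have hzy : z ≠ y := fun h => hz (h ▸ hy)
    simpa [hzx, hzy] using hK.2 x hx y hy z hz

theorem isCliqueModule_trueTwinClass (x : V) : IsCliqueModule G (G.trueTwinClass x) := by
  have closedNbhd_eq : ∀ a ∈ G.trueTwinClass x, ∀ b ∈ G.trueTwinClass x,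
      G.closedNbhd a = G.closedNbhd b := fun a ha b hb => ha.trans hb.symm
  refine ⟨fun a ha b hb hab => ?_, fun a ha b hb z hz => ?_⟩
  · have hb' : b ∈ G.closedNbhd a := closedNbhd_eq b hb a ha ▸ G.mem_closedNbhd_self b
    exact hb'.resolve_left hab.symm
  · have haz : z ≠ a := fun h => hz (h ▸ ha)
    have hbz : z ≠ b := fun h => hz (h ▸ hb)
    have := congrArg (z ∈ ·) (closedNbhd_eq a ha b hb)
    simpa [mem_closedNbhd_iff, haz, hbz] using this

theorem _root_.IsCliqueModule.subset_trueTwinClass {K : Set V} (hK : IsCliqueModule G K)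
    {x : V} (hx : x ∈ K) : K ⊆ G.trueTwinClass x :=
  fun _ hy => hK.closedNbhd_eq hy hx

theorem isCriticalClique_iff_exists_eq_trueTwinClass {K : Set V} :
    IsCriticalClique G K ↔ ∃ x, K = G.trueTwinClass x := by
  constructor
  · rintro ⟨⟨x, hx⟩, hK, hmax⟩
    exact ⟨x, (hmax _ (isCliqueModule_trueTwinClass x) (hK.subset_trueTwinClass hx)).symm⟩
  · rintro ⟨x, rfl⟩
    refine ⟨⟨x, G.mem_trueTwinClass_self x⟩, isCliqueModule_trueTwinClass x,
      fun K' hK' hsub => ?_⟩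
    exact (hK'.subset_trueTwinClass (hsub (G.mem_trueTwinClass_self x))).antisymm hsub

variable (G)

theorem ncard_setOf_isCriticalClique :
    {K : Set V | IsCriticalClique G K}.ncard = (range G.closedNbhd).ncard := by
  have hcrit : {K : Set V | IsCriticalClique G K} =
      (fun N => G.closedNbhd ⁻¹' {N}) '' range G.closedNbhd := by
    ext K
    simp [isCriticalClique_iff_exists_eq_trueTwinClass, trueTwinClass, eq_comm]
  rw [hcrit]
  refine InjOn.ncard_image ?_
  rintro _ ⟨x, rfl⟩ _ ⟨y, rfl⟩ hxy
  exact (congrArg (x ∈ ·) hxy).mp rfl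

theorem closedNbhd_editGraph_of_forall_notMem {F : Set (Sym2 V)} {x : V}
    (hx : ∀ e ∈ F, x ∉ e) : (editGraph G F).closedNbhd x = G.closedNbhd x := by
  ext z
  have hxz : s(x, z) ∉ F := fun h => hx _ h (Sym2.mem_mk_left x z)
  simp only [mem_closedNbhd_iff, editGraph, hxz, not_false_eq_true, and_true, and_false,
    or_false]
  exact or_congr_right ⟨And.right, fun h => ⟨h.ne, h⟩⟩

end SimpleGraph

theorem criticalClique_count_le_of_single_edit_general {V : Type*} [Fintype V]
    (G : SimpleGraph V) (u v : V) :
    {K : Set V | IsCriticalClique (editGraph G {s(u, v)}) K}.ncard ≤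
      {K : Set V | IsCriticalClique G K}.ncard + 4 := by
  have closedNbhd_eqOn : EqOn (editGraph G {s(u, v)}).closedNbhd G.closedNbhd {u, v}ᶜ := by
    intro x hx
    refine G.closedNbhd_editGraph_of_forall_notMem fun e he => ?_
    rw [mem_singleton_iff.mp he, Sym2.mem_iff]
    simpa using hx
  have pair_ncard_le : ({u, v} : Set V).ncard ≤ 2 := by
    linarith [ncard_insert_le u {v}, ncard_singleton v]
  rw [SimpleGraph.ncard_setOf_isCriticalClique, SimpleGraph.ncard_setOf_isCriticalClique]
  linarith [ncard_range_le_of_eqOn_compl closedNbhd_eqOn (toFinite _) (toFinite _)]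

theorem criticalClique_count_le_of_single_edit {V : Type*} [Fintype V]
    (G : SimpleGraph V) (u v : V) (huv : u ≠ v) :
    {K : Set V | IsCriticalClique (editGraph G {s(u, v)}) K}.ncard ≤
      {K : Set V | IsCriticalClique G K}.ncard + 4 :=
  criticalClique_count_le_of_single_edit_general G u v
end

section
/- A connected graph G is a 3-leaf power if and only if its critical clique graph C(G) is a tree. -/
open SimpleGraph

/-- `b` is a leaf of `T`: it has at most one neighbour. -/
def IsTreeLeaf {β : Type} (T : SimpleGraph β) (b : β) : Prop :=
  ∀ c d, T.Adj b c → T.Adj b d → c = d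

/-- `G` is a `k`-leaf power: there is a tree `T` whose set of leaves is exactly the
(injective) image of the vertex set of `G`, with two vertices adjacent in `G` iff the
corresponding leaves are at distance at most `k` in `T`. -/
def IsKLeafPower {V : Type} (k : ℕ) (G : SimpleGraph V) : Prop :=
  ∃ (β : Type) (T : SimpleGraph β) (f : V → β), T.IsTree ∧ Function.Injective f ∧
    (∀ b, IsTreeLeaf T b ↔ b ∈ Set.range f) ∧
    (∀ u v, G.Adj u v ↔ (u ≠ v ∧ T.dist (f u) (f v) ≤ k))

/-- The critical clique graph `C(G)`: vertices are the critical cliques of `G`, two of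
them being adjacent iff all edges between them are present in `G`. -/
def critCliqueGraph {V : Type*} (G : SimpleGraph V) :
    SimpleGraph {K : Set V // IsCriticalClique G K} where
  Adj K K' := K ≠ K' ∧ ∀ x ∈ K.1, ∀ y ∈ K'.1, G.Adj x y
  symm := ⟨fun _ _ h => ⟨h.1.symm, fun x hx y hy => (h.2 y hy x hx).symm⟩⟩
  loopless := ⟨fun _ h => h.1 rfl⟩

/-!
Every critical clique consists of the true twins of any of its members (vertices with the same
closed neighbourhood), and `G` is recovered from `C(G)` as a clique blow-up: distinct `u, v` are
adjacent iff their critical cliques coincide or are adjacent in `C(G)`.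

If a tree `T` realizes `G` as a 3-leaf power and `G` has at least two vertices, each leaf has a
unique neighbour, its parent, and two leaves are at distance at most 3 iff their parents coincide
or are adjacent. So `G` is a clique blow-up of `T` along the parent map; leaves with a common
parent are twins, hence sending a critical clique to the parent of its members is an injective
homomorphism `C(G) → T`, and `C(G)` is acyclic. Conversely, if `C(G)` is a tree, hanging every
vertex of `G` as a pendant leaf from its critical clique yields a tree realizing `G` as a 3-leaf
power.
-/

namespace SimpleGraph

variable {V α β : Type*}

section Twins

variable {G : SimpleGraph V}

def closedNeighborSet (G : SimpleGraph V) (v : V) : Set V := insert v (G.neighborSet v)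

lemma mem_closedNeighborSet {v w : V} : w ∈ G.closedNeighborSet v ↔ w = v ∨ G.Adj v w :=
  Iff.rfl

lemma adj_iff_mem_closedNeighborSet {v w : V} (h : w ≠ v) :
    G.Adj v w ↔ w ∈ G.closedNeighborSet v := by
  simp [mem_closedNeighborSet, h]

def twinClass (G : SimpleGraph V) (v : V) : Set V :=
  {u | G.closedNeighborSet u = G.closedNeighborSet v}

lemma mem_twinClass_self (v : V) : v ∈ G.twinClass v :=
  rfl

lemma twinClass_eq_of_mem {u v : V} (h : u ∈ G.twinClass v) : G.twinClass u = G.twinClass v := by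
  simp only [twinClass, show G.closedNeighborSet u = G.closedNeighborSet v from h]

end Twins

lemma dist_le_three_iff_of_neighborSet_eq_singleton {T : SimpleGraph β} {x y px py : β}
    (hxy : T.Reachable x y) (hx : T.neighborSet x = {px}) (hy : T.neighborSet y = {py}) :
    T.dist x y ≤ 3 ↔ px = py ∨ T.Adj px py := by
  have adj_x : ∀ {z}, T.Adj x z ↔ z = px := by
    intro z; rw [← mem_neighborSet, hx, Set.mem_singleton_iff]
  have adj_y : ∀ {z}, T.Adj y z ↔ z = py := by
    intro z; rw [← mem_neighborSet, hy, Set.mem_singleton_iff]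
  constructor
  · intro hd
    obtain ⟨w, hw⟩ := hxy.exists_walk_length_eq_dist
    rcases w with _ | ⟨h₁, _ | ⟨h₂, _ | ⟨h₃, _ | ⟨_, _⟩⟩⟩⟩
    · exact .inl (Set.singleton_eq_singleton_iff.mp (hx.symm.trans hy))
    · rw [← adj_x.mp h₁, ← adj_y.mp h₁.symm]
      exact .inr h₁.symm
    · exact .inl ((adj_x.mp h₁).symm.trans (adj_y.mp h₂.symm))
    · rw [← adj_x.mp h₁, ← adj_y.mp h₃.symm]
      exact .inr h₂
    · simp only [Walk.length_cons] at hw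
      omega
  · rintro (h | h)
    · exact (dist_le (.cons (adj_x.mpr rfl) (.cons (adj_y.mpr h).symm .nil))).trans
        (by simp)
    · exact (dist_le (.cons (adj_x.mpr rfl) (.cons h (.cons (adj_y.mpr rfl).symm .nil)))).trans
        (by simp)

lemma IsAcyclic.of_induce {G : SimpleGraph V} {s : Set V} (hs : (G.induce s).IsAcyclic)
    (hout : ∀ v ∉ s, (G.neighborSet v).Subsingleton) : G.IsAcyclic := by
  classical
  intro x c hc
  have hsupp : ∀ y ∈ c.support, y ∈ s := by
    intro y hy
    by_contra hys
    have hc' := hc.rotate hy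
    exact hc'.snd_ne_penultimate (hout y hys ((c.rotate y hy).adj_snd hc'.not_nil)
      ((c.rotate y hy).adj_penultimate hc'.not_nil).symm)
  have hinj : Function.Injective (Embedding.induce s : G.induce s ↪g G).toHom :=
    (Embedding.induce (G := G) s).injective
  refine hs (c.induce s hsupp) ((Walk.isCycle_map_iff_of_injective hinj).mp ?_)
  rwa [Walk.map_induce]

def pendantExtension (H : SimpleGraph α) (c : V → α) : SimpleGraph (α ⊕ V) where
  Adj
    | .inl a, .inl b => H.Adj a b
    | .inl a, .inr v => c v = a
    | .inr v, .inl a => c v = a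
    | .inr _, .inr _ => False
  symm := ⟨by rintro (a | v) (b | w) h <;> first | exact h | exact h.symm⟩
  loopless := ⟨by rintro (a | v) h; exacts [H.loopless.irrefl a h, h]⟩

namespace pendantExtension

variable {H : SimpleGraph α} {c : V → α}

@[simp] lemma adj_inl_inl {a b : α} :
    (H.pendantExtension c).Adj (.inl a) (.inl b) ↔ H.Adj a b :=
  Iff.rfl

@[simp] lemma adj_inr_inl {a : α} {v : V} :
    (H.pendantExtension c).Adj (.inr v) (.inl a) ↔ c v = a :=
  Iff.rfl

@[simp] lemma not_adj_inr_inr {v w : V} : ¬ (H.pendantExtension c).Adj (.inr v) (.inr w) :=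
  id

def inlEmbedding : H ↪g H.pendantExtension c :=
  ⟨Function.Embedding.inl, Iff.rfl⟩

lemma neighborSet_inr (v : V) : (H.pendantExtension c).neighborSet (.inr v) = {.inl (c v)} := by
  ext (a | w) <;> simp [eq_comm]

lemma connected (hH : H.Connected) : (H.pendantExtension c).Connected := by
  have : Nonempty (α ⊕ V) := ⟨.inl hH.nonempty.some⟩
  have reach_inl : ∀ x, ∃ a, (H.pendantExtension c).Reachable x (.inl a) := by
    rintro (a | v)
    · exact ⟨a, .rfl⟩
    · exact ⟨c v, Adj.reachable (adj_inr_inl.mpr rfl)⟩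
  refine ⟨fun x y => ?_⟩
  obtain ⟨a, ha⟩ := reach_inl x
  obtain ⟨b, hb⟩ := reach_inl y
  exact ha.trans (((hH a b).map inlEmbedding.toHom).trans hb.symm)

lemma isAcyclic (hH : H.IsAcyclic) : (H.pendantExtension c).IsAcyclic := by
  refine IsAcyclic.of_induce (s := Set.range Sum.inl)
    ((Embedding.isoInduceRange inlEmbedding).isAcyclic_iff.mp hH) ?_
  rintro (a | v) hv
  · exact absurd ⟨a, rfl⟩ hv
  · rw [neighborSet_inr]
    exact Set.subsingleton_singleton

lemma dist_inr_le_three_iff (hH : H.Connected) (u v : V) :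
    (H.pendantExtension c).dist (.inr u) (.inr v) ≤ 3 ↔ c u = c v ∨ H.Adj (c u) (c v) := by
  rw [dist_le_three_iff_of_neighborSet_eq_singleton ((connected hH).preconnected _ _)
    (neighborSet_inr u) (neighborSet_inr v)]
  simp

end pendantExtension

end SimpleGraph

lemma isTreeLeaf_iff_subsingleton {β : Type} {T : SimpleGraph β} {b : β} :
    IsTreeLeaf T b ↔ (T.neighborSet b).Subsingleton :=
  ⟨fun h _ hc _ hd => h _ _ hc hd, fun h _ _ hc hd => h hc hd⟩

lemma IsTreeLeaf.exists_neighborSet_eq_singleton {β : Type} {T : SimpleGraph β} {b b' : β}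
    (hb : IsTreeLeaf T b) (hr : T.Reachable b b') (hne : b ≠ b') :
    ∃ p, T.neighborSet b = {p} := by
  obtain ⟨p, hp⟩ := hr.nonempty_neighborSet_left hne
  exact ⟨p, Set.eq_singleton_iff_unique_mem.mpr ⟨hp, fun q hq => hb q p hq hp⟩⟩

def IsCliqueBlowup {V β : Type*} (G : SimpleGraph V) (T : SimpleGraph β) (p : V → β) : Prop :=
  ∀ u v, G.Adj u v ↔ u ≠ v ∧ (p u = p v ∨ T.Adj (p u) (p v))

section CriticalCliques

variable {V β : Type*} {G : SimpleGraph V}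

lemma IsCliqueModule.closedNeighborSet_eq {K : Set V} (hK : IsCliqueModule G K) {u v : V}
    (hu : u ∈ K) (hv : v ∈ K) : G.closedNeighborSet u = G.closedNeighborSet v := by
  ext w
  by_cases hw : w ∈ K
  · have hmem : ∀ x ∈ K, w ∈ G.closedNeighborSet x := fun x hx =>
      (eq_or_ne w x).imp_right fun hwx => hK.1 hx hw hwx.symm
    exact iff_of_true (hmem u hu) (hmem v hv)
  · rw [← adj_iff_mem_closedNeighborSet (ne_of_mem_of_not_mem hu hw).symm,
      ← adj_iff_mem_closedNeighborSet (ne_of_mem_of_not_mem hv hw).symm]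
    exact hK.2 u hu v hv w hw

lemma IsCliqueModule.subset_twinClass {K : Set V} (hK : IsCliqueModule G K) {v : V}
    (hv : v ∈ K) : K ⊆ G.twinClass v :=
  fun _ hu => hK.closedNeighborSet_eq hu hv

lemma isCliqueModule_twinClass (G : SimpleGraph V) (v : V) : IsCliqueModule G (G.twinClass v) := by
  refine ⟨fun a ha b hb hab => ?_, fun x hx y hy z hz => ?_⟩
  · have hba : b ∈ G.closedNeighborSet a := by
      rw [ha, ← hb]
      exact Set.mem_insert b _
    exact hba.resolve_left hab.symm
  · rw [adj_iff_mem_closedNeighborSet (ne_of_mem_of_not_mem hx hz).symm,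
      adj_iff_mem_closedNeighborSet (ne_of_mem_of_not_mem hy hz).symm, hx, hy]

lemma isCriticalClique_twinClass (G : SimpleGraph V) (v : V) :
    IsCriticalClique G (G.twinClass v) :=
  ⟨⟨v, mem_twinClass_self v⟩, isCliqueModule_twinClass G v, fun _ hK hsub =>
    (hK.subset_twinClass (hsub (mem_twinClass_self v))).antisymm hsub⟩

lemma IsCriticalClique.eq_twinClass {K : Set V} (hK : IsCriticalClique G K) {v : V}
    (hv : v ∈ K) : K = G.twinClass v :=
  (hK.2.2 _ (isCliqueModule_twinClass G v) (hK.2.1.subset_twinClass hv)).symm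

def critCliqueOf (G : SimpleGraph V) (v : V) : {K : Set V // IsCriticalClique G K} :=
  ⟨G.twinClass v, isCriticalClique_twinClass G v⟩

lemma critCliqueOf_eq_iff {K : {K : Set V // IsCriticalClique G K}} {v : V} :
    critCliqueOf G v = K ↔ v ∈ K.1 :=
  ⟨fun h => h ▸ mem_twinClass_self v, fun hv => (Subtype.ext (K.2.eq_twinClass hv)).symm⟩

lemma isCliqueBlowup_critCliqueOf (G : SimpleGraph V) :
    IsCliqueBlowup G (critCliqueGraph G) (critCliqueOf G) := by
  intro u v
  constructor
  · intro huv
    refine ⟨huv.ne, or_iff_not_imp_left.mpr fun hne => ⟨hne, fun a ha b hb => ?_⟩⟩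
    have hv : v ∉ G.twinClass u := fun hv => hne (Subtype.ext (twinClass_eq_of_mem hv).symm)
    have hav : G.Adj a v := ((isCliqueModule_twinClass G u).2 a ha u rfl v hv).mpr huv
    have ha' : a ∉ G.twinClass v := fun ha' =>
      hne (Subtype.ext ((twinClass_eq_of_mem ha).symm.trans (twinClass_eq_of_mem ha')))
    exact (((isCliqueModule_twinClass G v).2 b hb v rfl a ha').mpr hav.symm).symm
  · rintro ⟨hne, heq | hadj⟩
    · exact (isCliqueModule_twinClass G u).1 rfl (critCliqueOf_eq_iff.mp heq.symm) hne
    · exact hadj.2 u rfl v rfl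

lemma IsCliqueBlowup.reachable {T : SimpleGraph β} {p : V → β} (h : IsCliqueBlowup G T p)
    {u v : V} (huv : G.Reachable u v) : T.Reachable (p u) (p v) := by
  rw [reachable_iff_reflTransGen] at huv ⊢
  refine huv.lift' p fun a b hab => ?_
  show Relation.ReflTransGen T.Adj (p a) (p b)
  rcases ((h a b).mp hab).2 with heq | hadj
  · exact heq ▸ .refl
  · exact .single hadj

lemma critCliqueGraph_connected (hG : G.Connected) : (critCliqueGraph G).Connected := by
  have : Nonempty {K : Set V // IsCriticalClique G K} := ⟨critCliqueOf G hG.nonempty.some⟩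
  refine ⟨fun K K' => ?_⟩
  obtain ⟨u, hu⟩ := K.2.1
  obtain ⟨v, hv⟩ := K'.2.1
  rw [← critCliqueOf_eq_iff.mpr hu, ← critCliqueOf_eq_iff.mpr hv]
  exact (isCliqueBlowup_critCliqueOf G).reachable (hG.preconnected u v)

lemma IsCliqueBlowup.closedNeighborSet_eq {T : SimpleGraph β} {p : V → β}
    (h : IsCliqueBlowup G T p) (v : V) :
    G.closedNeighborSet v = {w | p v = p w ∨ T.Adj (p v) (p w)} := by
  ext w
  rcases eq_or_ne w v with rfl | hwv
  · simp [mem_closedNeighborSet]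
  · simp [← adj_iff_mem_closedNeighborSet hwv, h v w, hwv.symm]

lemma IsCliqueBlowup.critCliqueOf_eq {T : SimpleGraph β} {p : V → β} (h : IsCliqueBlowup G T p)
    {u v : V} (huv : p u = p v) : critCliqueOf G u = critCliqueOf G v := by
  refine Subtype.ext (twinClass_eq_of_mem ?_)
  show G.closedNeighborSet u = G.closedNeighborSet v
  rw [h.closedNeighborSet_eq, h.closedNeighborSet_eq, huv]

lemma IsCliqueBlowup.critCliqueGraph_isAcyclic {T : SimpleGraph β} {p : V → β}
    (h : IsCliqueBlowup G T p) (hT : T.IsAcyclic) : (critCliqueGraph G).IsAcyclic := by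
  let q : {K : Set V // IsCriticalClique G K} → β := fun K => p K.2.1.some
  have hq : ∀ K, critCliqueOf G K.2.1.some = K := fun K => critCliqueOf_eq_iff.mpr K.2.1.some_mem
  have hinj : Function.Injective q := fun K K' hKK' =>
    (hq K).symm.trans ((h.critCliqueOf_eq hKK').trans (hq K'))
  refine hT.comap ⟨q, fun {K K'} hKK' => ?_⟩ hinj
  exact ((h _ _).mp (hKK'.2 _ K.2.1.some_mem _ K'.2.1.some_mem)).2.resolve_left (hinj.ne hKK'.1)

end CriticalCliques

section LeafPowers

variable {V : Type} {G : SimpleGraph V}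

lemma IsKLeafPower.exists_isCliqueBlowup (h : IsKLeafPower 3 G) :
    ∃ (β : Type) (T : SimpleGraph β) (p : V → β), T.IsAcyclic ∧ IsCliqueBlowup G T p := by
  obtain ⟨β, T, f, hT, hf, hleaf, hadj⟩ := h
  rcases subsingleton_or_nontrivial V with _ | _
  · exact ⟨β, T, f, hT.isAcyclic, fun u v => by simp [Subsingleton.elim u v]⟩
  have parent : ∀ u, ∃ p, T.neighborSet (f u) = {p} := fun u =>
    have ⟨v, hvu⟩ := exists_ne u
    ((hleaf _).mpr ⟨u, rfl⟩).exists_neighborSet_eq_singleton (hT.connected _ _) (hf.ne hvu.symm)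
  choose p hp using parent
  refine ⟨β, T, p, hT.isAcyclic, fun u v => ?_⟩
  rw [hadj, dist_le_three_iff_of_neighborSet_eq_singleton (hT.connected _ _) (hp u) (hp v)]

lemma isKLeafPower_of_subsingleton [Subsingleton V] [Nonempty V] (k : ℕ) (G : SimpleGraph V) :
    IsKLeafPower k G := by
  refine ⟨PUnit, ⊥, fun _ => .unit, .of_subsingleton, fun u v _ => Subsingleton.elim u v,
    fun b => iff_of_true (fun _ _ h => h.elim) ⟨Classical.arbitrary V, rfl⟩, fun u v => ?_⟩
  simp [Subsingleton.elim u v]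

lemma IsCliqueBlowup.isKLeafPower_three {α : Type} {H : SimpleGraph α} {c : V → α}
    (h : IsCliqueBlowup G H c) (hH : H.IsTree)
    (hleaf : ∀ a, ¬ IsTreeLeaf (H.pendantExtension c) (.inl a)) : IsKLeafPower 3 G := by
  refine ⟨α ⊕ V, H.pendantExtension c, Sum.inr,
    ⟨pendantExtension.connected hH.connected, pendantExtension.isAcyclic hH.isAcyclic⟩,
    Sum.inr_injective, ?_, fun u v => ?_⟩
  · rintro (a | v)
    · exact iff_of_false (hleaf a) (by simp)
    · refine iff_of_true (isTreeLeaf_iff_subsingleton.mpr ?_) ⟨v, rfl⟩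
      rw [pendantExtension.neighborSet_inr]
      exact Set.subsingleton_singleton
  · rw [h u v, pendantExtension.dist_inr_le_three_iff hH.connected]

lemma not_isTreeLeaf_inl_critCliqueOf [Nontrivial V] (hC : (critCliqueGraph G).Connected)
    (K : {K : Set V // IsCriticalClique G K}) :
    ¬ IsTreeLeaf ((critCliqueGraph G).pendantExtension (critCliqueOf G)) (.inl K) := by
  intro hK
  obtain ⟨v, hv⟩ := K.2.1
  have hKv : ((critCliqueGraph G).pendantExtension (critCliqueOf G)).Adj (.inl K) (.inr v) :=
    critCliqueOf_eq_iff.mpr hv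
  obtain ⟨w, hwv⟩ := exists_ne v
  by_cases hw : w ∈ K.1
  · exact hwv (Sum.inr_injective (hK _ _ (critCliqueOf_eq_iff.mpr hw) hKv))
  · have hne : K ≠ critCliqueOf G w := fun h => hw (h ▸ mem_twinClass_self w)
    obtain ⟨L, hL⟩ := (hC.preconnected K _).nonempty_neighborSet_left hne
    exact Sum.inl_ne_inr (hK _ _ hL hKv)

end LeafPowers

theorem threeLeafPower_iff_critCliqueGraph_isTree {V : Type} (G : SimpleGraph V)
    (hG : G.Connected) :
    IsKLeafPower 3 G ↔ (critCliqueGraph G).IsTree := by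
  constructor
  · intro hLP
    obtain ⟨β, T, p, hT, hp⟩ := hLP.exists_isCliqueBlowup
    exact ⟨critCliqueGraph_connected hG, hp.critCliqueGraph_isAcyclic hT⟩
  · intro hC
    have := hG.nonempty
    rcases subsingleton_or_nontrivial V with _ | _
    · exact isKLeafPower_of_subsingleton 3 G
    · exact (isCliqueBlowup_critCliqueOf G).isKLeafPower_three hC
        (not_isTreeLeaf_inl_critCliqueOf hC.connected)
end

section
/- Let G1 and G2 be disjoint connected 3-leaf powers, S1 ⊆ V(G1) and S2 ⊆ V(G2) nonempty, and let H be the join composition obtained by adding all edges between S1 and S2. If S1 and S2 are cliques of G1 and G2 respectively, and for each i, whenever Si is not a critical clique of Gi then Gi is a clique, then H is a 3-leaf power. -/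
open SimpleGraph

/-- The bull: a triangle `0,1,2` with pendant vertices `3` (on `1`) and `4` (on `2`). -/
def bull : SimpleGraph (Fin 5) :=
  SimpleGraph.fromRel (fun a b => (a, b) ∈ ([(0,1),(0,2),(1,2),(1,3),(2,4)] : List (Fin 5 × Fin 5)))

/-- The dart: a diamond `0,1,2,3` (missing edge `(0,1)`) plus a pendant vertex `4`
adjacent to the degree-3 vertex `2`. -/
def dart : SimpleGraph (Fin 5) :=
  SimpleGraph.fromRel (fun a b => (a, b) ∈ ([(0,2),(0,3),(1,2),(1,3),(2,3),(2,4)] : List (Fin 5 × Fin 5)))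

/-- The gem: a path `0-1-2-3` plus a dominating vertex `4`. -/
def gem : SimpleGraph (Fin 5) :=
  SimpleGraph.fromRel (fun a b => (a, b) ∈ ([(0,1),(1,2),(2,3),(0,4),(1,4),(2,4),(3,4)] : List (Fin 5 × Fin 5)))

/-- A graph is a 3-leaf power iff it is {bull, dart, gem, chordless `C≥4`}-free. -/
def Is3LeafPower {V : Type*} (H : SimpleGraph V) : Prop :=
  IsEmpty (bull ↪g H) ∧ IsEmpty (dart ↪g H) ∧ IsEmpty (gem ↪g H) ∧
    ∀ n, 4 ≤ n → IsEmpty (SimpleGraph.cycleGraph n ↪g H)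

/-- The join composition `(G1,S1) ⊗ (G2,S2)`: the disjoint union of `G1` and `G2`
together with all edges between `S1` and `S2`. -/
def joinComp {V1 V2 : Type*} (G1 : SimpleGraph V1) (G2 : SimpleGraph V2)
    (S1 : Set V1) (S2 : Set V2) : SimpleGraph (V1 ⊕ V2) :=
  SimpleGraph.fromRel (fun a b =>
    (∃ x y, a = .inl x ∧ b = .inl y ∧ G1.Adj x y) ∨
    (∃ x y, a = .inr x ∧ b = .inr y ∧ G2.Adj x y) ∨
    (∃ x y, a = .inl x ∧ b = .inr y ∧ x ∈ S1 ∧ y ∈ S2))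

/-!
Record on every vertex of `H = (G₁,S₁) ⊗ (G₂,S₂)` its side and whether it lies in `K = S₁ ∪ S₂`.
Because `K` is a clique of `H`, each `Sᵢ` is a clique module of `Gᵢ`, and the only edges between
the sides join `S₁` to `S₂`, these labels obey a few local rules that every induced subgraph of `H`
inherits. One further rule comes from criticality: two adjacent vertices outside `Sᵢ` with a common
neighbour in `Sᵢ` are true twins, since otherwise a vertex that separates one of them from `Sᵢ`
(it exists because `Sᵢ` is a maximal clique module) completes a bull, dart, gem or `C₄` in `Gᵢ`.
For the bull, the dart and the gem a finite check shows that the rules force all vertices onto one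
side; a hole meeting both sides crosses between them along two distinct edges, whose endpoints
would form a triangle in the clique `K`. Hence every forbidden induced subgraph of `H` already
lies in `G₁` or in `G₂`.
-/

section

variable {V W : Type*}

instance : DecidableRel bull.Adj := fun _ _ => decidable_of_iff' _ (fromRel_adj _ _ _)
instance : DecidableRel dart.Adj := fun _ _ => decidable_of_iff' _ (fromRel_adj _ _ _)
instance : DecidableRel gem.Adj := fun _ _ => decidable_of_iff' _ (fromRel_adj _ _ _)

theorem IsEmpty.false_of_induced {G : SimpleGraph V} {n : ℕ} {X : SimpleGraph (Fin n)}
    (hX : IsEmpty (X ↪g G)) (v : Fin n → V)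
    -- at each use `v` is a concrete `![…]` and the hypotheses in context decide every pair
    (hv : ∀ i j, i < j → v i ≠ v j ∧ (G.Adj (v i) (v j) ↔ X.Adj i j) := by
      simp +decide [Fin.forall_fin_succ]; grind [Adj.symm, Adj.ne]) : False := by
  have hv' : ∀ i j, i ≠ j → v i ≠ v j ∧ (G.Adj (v i) (v j) ↔ X.Adj i j) := by
    intro i j hij
    rcases hij.lt_or_gt with h | h
    · exact hv i j h
    · obtain ⟨hne, hadj⟩ := hv j i h
      exact ⟨hne.symm, by rw [G.adj_comm, X.adj_comm, hadj]⟩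
  refine hX.false ⟨⟨v, fun i j h => ?_⟩, fun {i j} => ?_⟩
  · by_contra hij
    exact (hv' i j hij).1 h
  · by_cases hij : i = j
    · simp [hij]
    · exact (hv' i j hij).2

section CriticalClique

def AdjNeighborsAreTwins (G : SimpleGraph V) (S : Set V) : Prop :=
  ∀ ⦃s a b c : V⦄, s ∈ S → a ∉ S → b ∉ S → G.Adj a s → G.Adj b s → G.Adj a b → G.Adj b c →
    a ≠ c → G.Adj a c

variable {G : SimpleGraph V} {S : Set V}

theorem IsCriticalClique.exists_not_adj_iff (hS : IsCriticalClique G S) {s z : V} (hs : s ∈ S)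
    (hz : z ∉ S) (hzs : G.Adj z s) : ∃ w ∉ S, w ≠ z ∧ ¬(G.Adj z w ↔ G.Adj s w) := by
  obtain ⟨-, ⟨hclique, hmod⟩, hmax⟩ := hS
  have hclique' : G.IsClique (insert z S) :=
    hclique.insert fun x hx _ => ((hmod x hx s hs z hz).mpr hzs.symm).symm
  have hnot : ¬IsCliqueModule G (insert z S) := fun h =>
    hz (hmax _ h (Set.subset_insert z S) ▸ Set.mem_insert z S)
  simp only [IsCliqueModule, hclique', true_and, not_forall] at hnot
  obtain ⟨x, hx, y, hy, w, hw, hxy⟩ := hnot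
  rw [Set.mem_insert_iff, not_or] at hw
  refine ⟨w, hw.2, hw.1, fun hzw => hxy ?_⟩
  have hins : ∀ x ∈ insert z S, (G.Adj x w ↔ G.Adj s w) := by
    rintro x (rfl | hx)
    exacts [hzw, hmod x hx s hs w hw.2]
  exact (hins x hx).trans (hins y hy).symm

theorem IsCriticalClique.not_paw (hL : Is3LeafPower G) (hS : IsCriticalClique G S) {s a b c : V}
    (hs : s ∈ S) (ha : a ∉ S) (has : G.Adj a s) (hbs : G.Adj b s) (hab : G.Adj a b)
    (hbc : G.Adj b c) (hac : ¬G.Adj a c) (hsc : ¬G.Adj s c) : False := by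
  obtain ⟨hbull, hdart, hgem, hhole⟩ := hL
  have hC4 := hhole 4 le_rfl
  obtain ⟨w, hwS, hwa, hw⟩ := hS.exists_not_adj_iff hs ha has
  rcases em (G.Adj a w) with haw | haw <;> rcases em (G.Adj s w) with hsw | hsw
  · exact hw (iff_of_true haw hsw)
  · rcases em (G.Adj b w) with hbw | hbw <;> rcases em (G.Adj c w) with hcw | hcw
    · exact hgem.false_of_induced ![s, a, w, c, b]
    · exact hdart.false_of_induced ![s, w, b, a, c]
    · exact hC4.false_of_induced ![a, b, c, w]
    · exact hbull.false_of_induced ![s, a, b, w, c]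
  · rcases em (G.Adj b w) with hbw | hbw <;> rcases em (G.Adj c w) with hcw | hcw
    · exact hgem.false_of_induced ![a, s, w, c, b]
    · exact hdart.false_of_induced ![a, w, b, s, c]
    · exact hC4.false_of_induced ![b, s, w, c]
    · exact hbull.false_of_induced ![a, b, s, c, w]
  · exact hw (iff_of_false haw hsw)

theorem IsCriticalClique.not_diamond (hL : Is3LeafPower G) (hS : IsCriticalClique G S)
    {s a b c : V} (hs : s ∈ S) (hb : b ∉ S) (has : G.Adj a s) (hbs : G.Adj b s)
    (hcs : G.Adj c s) (hab : G.Adj a b) (hbc : G.Adj b c) (hne : a ≠ c) (hac : ¬G.Adj a c) :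
    False := by
  obtain ⟨hbull, hdart, hgem, hhole⟩ := hL
  have hC4 := hhole 4 le_rfl
  obtain ⟨w, hwS, hwb, hw⟩ := hS.exists_not_adj_iff hs hb hbs
  rcases em (G.Adj b w) with hbw | hbw <;> rcases em (G.Adj s w) with hsw | hsw
  · exact hw (iff_of_true hbw hsw)
  · rcases em (G.Adj a w) with haw | haw <;> rcases em (G.Adj c w) with hcw | hcw
    · exact hC4.false_of_induced ![a, s, c, w]
    · exact hgem.false_of_induced ![c, s, a, w, b]
    · exact hgem.false_of_induced ![a, s, c, w, b]
    · exact hdart.false_of_induced ![a, c, b, s, w]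
  · rcases em (G.Adj a w) with haw | haw <;> rcases em (G.Adj c w) with hcw | hcw
    · exact hC4.false_of_induced ![a, b, c, w]
    · exact hgem.false_of_induced ![c, b, a, w, s]
    · exact hgem.false_of_induced ![a, b, c, w, s]
    · exact hdart.false_of_induced ![a, c, s, b, w]
  · exact hw (iff_of_false hbw hsw)

theorem IsCriticalClique.adjNeighborsAreTwins (hL : Is3LeafPower G) (hS : IsCriticalClique G S) :
    AdjNeighborsAreTwins G S := by
  intro s a b c hs ha hb has hbs hab hbc hac
  by_contra hac'
  by_cases hcs : G.Adj c s
  · exact hS.not_diamond hL hs hb has hbs hcs hab hbc hac hac'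
  · exact hS.not_paw hL hs ha has hbs hab hbc hac' fun h => hcs h.symm

theorem Is3LeafPower.isCliqueModule_and_adjNeighborsAreTwins (hL : Is3LeafPower G)
    (hS : ¬IsCriticalClique G S → G.IsClique Set.univ) :
    IsCliqueModule G S ∧ AdjNeighborsAreTwins G S := by
  by_cases hcrit : IsCriticalClique G S
  · exact ⟨hcrit.2.1, hcrit.adjNeighborsAreTwins hL⟩
  · have htop := hS hcrit
    refine ⟨⟨htop.subset (Set.subset_univ S), fun x hx y hy z hz => ?_⟩,
      fun s a b c _ _ _ _ _ _ _ hac => htop trivial trivial hac⟩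
    exact iff_of_true (htop trivial trivial (by rintro rfl; exact hz hx))
      (htop trivial trivial (by rintro rfl; exact hz hy))

end CriticalClique

/-- `side` and `K` abstract, on an induced subgraph of `joinComp G₁ G₂ S₁ S₂`, the side of a vertex
and membership in `S₁ ∪ S₂`; the fields are the rules that pass to induced subgraphs. -/
structure IsJoinLabelling (X : SimpleGraph W) (side : W → Bool) (K : Set W) : Prop where
  isClique : X.IsClique K
  mem_of_adj_of_side_ne {u v : W} : X.Adj u v → side u ≠ side v → u ∈ K
  adj_iff_adj {u v w : W} : side u = side v → u ∈ K → v ∈ K → w ∉ K → (X.Adj u w ↔ X.Adj v w)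
  adj_of_adj {s a b c : W} : s ∈ K → a ∉ K → b ∉ K → X.Adj a s → X.Adj b s → X.Adj a b →
    X.Adj b c → a ≠ c → X.Adj a c

set_option synthInstance.maxSize 2000 in
instance [Fintype W] [DecidableEq W] (X : SimpleGraph W) [DecidableRel X.Adj] (side : W → Bool)
    (K : Set W) [DecidablePred (· ∈ K)] : Decidable (IsJoinLabelling X side K) :=
  decidable_of_iff
    ((∀ u ∈ K, ∀ v ∈ K, u ≠ v → X.Adj u v) ∧
      (∀ u v, X.Adj u v → side u ≠ side v → u ∈ K) ∧
      (∀ u v w, side u = side v → u ∈ K → v ∈ K → w ∉ K → (X.Adj u w ↔ X.Adj v w)) ∧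
      (∀ s a b c, s ∈ K → a ∉ K → b ∉ K → X.Adj a s → X.Adj b s → X.Adj a b → X.Adj b c →
        a ≠ c → X.Adj a c))
    ⟨fun ⟨h₁, h₂, h₃, h₄⟩ => ⟨h₁, h₂ _ _, h₃ _ _ _, h₄ _ _ _ _⟩,
      fun ⟨h₁, h₂, h₃, h₄⟩ => ⟨h₁, @h₂, @h₃, @h₄⟩⟩

theorem IsJoinLabelling.comap {X : SimpleGraph W} {Y : SimpleGraph V} {side : V → Bool}
    {K : Set V} (h : IsJoinLabelling Y side K) (f : X ↪g Y) :
    IsJoinLabelling X (side ∘ f) (f ⁻¹' K) where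
  isClique _ hu _ hv huv := f.map_adj_iff.mp (h.isClique hu hv (f.injective.ne huv))
  mem_of_adj_of_side_ne huv hside := h.mem_of_adj_of_side_ne (f.map_adj_iff.mpr huv) hside
  adj_iff_adj hside hu hv hw := by simpa only [f.map_adj_iff] using h.adj_iff_adj hside hu hv hw
  adj_of_adj hs ha hb has hbs hab hbc hac := f.map_adj_iff.mp <|
    h.adj_of_adj hs ha hb (f.map_adj_iff.mpr has) (f.map_adj_iff.mpr hbs) (f.map_adj_iff.mpr hab)
      (f.map_adj_iff.mpr hbc) (f.injective.ne hac)

def IsJoinRigid (X : SimpleGraph W) : Prop :=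
  ∀ (side : W → Bool) (K : Set W), IsJoinLabelling X side K → ∀ u v, side u = side v

theorem isJoinRigid_of_forall_bool {X : SimpleGraph W}
    (h : ∀ side inK : W → Bool, IsJoinLabelling X side {u | inK u} → ∀ u v, side u = side v) :
    IsJoinRigid X := by
  classical
  intro side K hK
  exact h side (fun u => decide (u ∈ K)) (by simpa only [decide_eq_true_eq, Set.ofPred_mem_eq])

theorem isJoinRigid_bull : IsJoinRigid bull :=
  isJoinRigid_of_forall_bool (by decide +kernel)

theorem isJoinRigid_dart : IsJoinRigid dart :=
  isJoinRigid_of_forall_bool (by decide +kernel)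

theorem isJoinRigid_gem : IsJoinRigid gem :=
  isJoinRigid_of_forall_bool (by decide +kernel)

section Cycle

open scoped Fin.CommRing

theorem Fin.exists_eq_and_add_one_ne {m : ℕ} {α : Type*} (f : Fin (m + 1) → α) {u v : Fin (m + 1)}
    (h : f u ≠ f v) : ∃ i, f i = f u ∧ f (i + 1) ≠ f u := by
  by_contra! hstep
  have hreach : ∀ k : ℕ, f (u + k) = f u := by
    intro k
    induction k with
    | zero => simp
    | succ k ih => rw [Nat.cast_succ, ← add_assoc]; exact hstep _ ih
  exact h (by simpa using (hreach (v - u).val).symm)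

theorem cycleGraph_cliqueFree_three {n : ℕ} (hn : 4 ≤ n) : (cycleGraph n).CliqueFree 3 := by
  obtain ⟨m, rfl⟩ : ∃ m, n = m + 4 := ⟨n - 4, by omega⟩
  intro s hs
  obtain ⟨a, b, c, hab, hac, hbc, rfl⟩ := is3Clique_iff.mp hs
  have h1 : (1 : Fin (m + 4)) ≠ 0 := by simp
  have h3 : (3 : Fin (m + 4)) ≠ 0 := fun h => by
    simpa [Nat.mod_eq_of_lt] using congrArg Fin.val h
  have hab := (cycleGraph_adj (n := m + 2)).mp hab
  have hac := (cycleGraph_adj (n := m + 2)).mp hac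
  have hbc := (cycleGraph_adj (n := m + 2)).mp hbc
  grind

theorem isJoinRigid_cycleGraph {n : ℕ} (hn : 4 ≤ n) : IsJoinRigid (cycleGraph n) := by
  obtain ⟨m, rfl⟩ : ∃ m, n = m + 4 := ⟨n - 4, by omega⟩
  intro side K hK u v
  by_contra huv
  have hcross : ∀ i, side i ≠ side (i + 1) → i ∈ K ∧ i + 1 ∈ K := fun i hi =>
    have hadj : (cycleGraph (m + 4)).Adj i (i + 1) :=
      (cycleGraph_adj (n := m + 2)).mpr (Or.inr (add_sub_cancel_left i 1))
    ⟨hK.mem_of_adj_of_side_ne hadj hi, hK.mem_of_adj_of_side_ne hadj.symm hi.symm⟩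
  have hnoTriangle : ∀ a ∈ K, ∀ b ∈ K, ∀ c ∈ K, a ≠ b → a ≠ c → b ≠ c → False :=
    fun a ha b hb c hc hab hac hbc => cycleGraph_cliqueFree_three hn {a, b, c} <|
      is3Clique_triple_iff.mpr ⟨hK.isClique ha hb hab, hK.isClique ha hc hac, hK.isClique hb hc hbc⟩
  obtain ⟨i, hi, hi₁⟩ := Fin.exists_eq_and_add_one_ne side huv
  obtain ⟨j, hj, hj₁⟩ := Fin.exists_eq_and_add_one_ne side (Ne.symm huv)
  obtain ⟨hiK, hi₁K⟩ := hcross i (hi ▸ hi₁.symm)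
  obtain ⟨hjK, hj₁K⟩ := hcross j (hj ▸ hj₁.symm)
  have h2 : (2 : Fin (m + 4)) ≠ 0 := fun h => by
    simpa [Nat.mod_eq_of_lt] using congrArg Fin.val h
  rcases eq_or_ne j (i + 1) with rfl | hji
  · exact hnoTriangle i hiK (i + 1) hi₁K (i + 1 + 1) hj₁K (by grind) (by grind) (by grind)
  · exact hnoTriangle i hiK (i + 1) hi₁K j hjK (by grind) (by grind) hji.symm

end Cycle

section JoinComp

variable {V₁ V₂ : Type*} {G₁ : SimpleGraph V₁} {G₂ : SimpleGraph V₂} {S₁ : Set V₁} {S₂ : Set V₂}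

@[simp]
theorem joinComp_adj_inl_inl {x y : V₁} :
    (joinComp G₁ G₂ S₁ S₂).Adj (.inl x) (.inl y) ↔ G₁.Adj x y := by
  simpa [joinComp, G₁.adj_comm y x] using @Adj.ne _ G₁ x y

@[simp]
theorem joinComp_adj_inr_inr {x y : V₂} :
    (joinComp G₁ G₂ S₁ S₂).Adj (.inr x) (.inr y) ↔ G₂.Adj x y := by
  simpa [joinComp, G₂.adj_comm y x] using @Adj.ne _ G₂ x y

@[simp]
theorem joinComp_adj_inl_inr {x : V₁} {y : V₂} :
    (joinComp G₁ G₂ S₁ S₂).Adj (.inl x) (.inr y) ↔ x ∈ S₁ ∧ y ∈ S₂ := by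
  simp [joinComp]

@[simp]
theorem joinComp_adj_inr_inl {x : V₂} {y : V₁} :
    (joinComp G₁ G₂ S₁ S₂).Adj (.inr x) (.inl y) ↔ y ∈ S₁ ∧ x ∈ S₂ := by
  rw [adj_comm, joinComp_adj_inl_inr]

theorem nonempty_embedding_of_forall_isLeft {X : SimpleGraph W} (f : X ↪g joinComp G₁ G₂ S₁ S₂)
    (h : ∀ u, (f u).isLeft) : Nonempty (X ↪g G₁) := by
  choose g hg using fun u => Sum.isLeft_iff.mp (h u)
  refine ⟨⟨⟨g, fun u v huv => f.injective (by rw [hg, hg, huv])⟩, fun {u v} => ?_⟩⟩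
  change G₁.Adj (g u) (g v) ↔ X.Adj u v
  rw [← joinComp_adj_inl_inl (G₂ := G₂) (S₁ := S₁) (S₂ := S₂), ← hg, ← hg, f.map_adj_iff]

theorem nonempty_embedding_of_forall_isRight {X : SimpleGraph W} (f : X ↪g joinComp G₁ G₂ S₁ S₂)
    (h : ∀ u, (f u).isRight) : Nonempty (X ↪g G₂) := by
  choose g hg using fun u => Sum.isRight_iff.mp (h u)
  refine ⟨⟨⟨g, fun u v huv => f.injective (by rw [hg, hg, huv])⟩, fun {u v} => ?_⟩⟩
  change G₂.Adj (g u) (g v) ↔ X.Adj u v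
  rw [← joinComp_adj_inr_inr (G₁ := G₁) (S₁ := S₁) (S₂ := S₂), ← hg, ← hg, f.map_adj_iff]

theorem isJoinLabelling_joinComp (h₁ : IsCliqueModule G₁ S₁) (h₂ : IsCliqueModule G₂ S₂)
    (t₁ : AdjNeighborsAreTwins G₁ S₁) (t₂ : AdjNeighborsAreTwins G₂ S₂) :
    IsJoinLabelling (joinComp G₁ G₂ S₁ S₂) Sum.isLeft (Sum.inl '' S₁ ∪ Sum.inr '' S₂) where
  isClique := by
    rintro (x | x) hx (y | y) hy hxy <;> simp_all
    · exact h₁.1 hx hy hxy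
    · exact h₂.1 hx hy hxy
  mem_of_adj_of_side_ne := by
    rintro (x | x) (y | y) <;> simp_all
  adj_iff_adj := by
    rintro (x | x) (y | y) (z | z) hside hx hy hz <;> simp_all
    · exact h₁.2 x hx y hy z hz
    · exact h₂.2 x hx y hy z hz
  adj_of_adj := by
    rintro (s | s) (a | a) (b | b) (c | c) hs ha hb has hbs hab hbc hac <;> simp_all
    · exact t₁ hs ha hb has hbs hab hbc hac
    · exact t₂ hs ha hb has hbs hab hbc hac

theorem IsJoinRigid.isEmpty_embedding_joinComp {X : SimpleGraph W} (hX : IsJoinRigid X)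
    {K : Set (V₁ ⊕ V₂)} (hJ : IsJoinLabelling (joinComp G₁ G₂ S₁ S₂) Sum.isLeft K)
    (h₁ : IsEmpty (X ↪g G₁)) (h₂ : IsEmpty (X ↪g G₂)) : IsEmpty (X ↪g joinComp G₁ G₂ S₁ S₂) := by
  refine ⟨fun f => ?_⟩
  by_cases hleft : ∀ u, (f u).isLeft
  · exact (nonempty_embedding_of_forall_isLeft f hleft).elim h₁.false
  · push Not at hleft
    obtain ⟨u₀, hu₀⟩ := hleft
    refine (nonempty_embedding_of_forall_isRight f fun u => ?_).elim h₂.false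
    have hside : (f u).isLeft = (f u₀).isLeft := hX _ _ (hJ.comap f) u u₀
    simpa [hu₀] using hside

end JoinComp

end

theorem joinComp_threeLeafPower_of_cliques_general {V1 V2 : Type*}
    (G1 : SimpleGraph V1) (G2 : SimpleGraph V2)
    (hL1 : Is3LeafPower G1) (hL2 : Is3LeafPower G2)
    (S1 : Set V1) (S2 : Set V2)
    (hcrit1 : ¬ IsCriticalClique G1 S1 → G1.IsClique Set.univ)
    (hcrit2 : ¬ IsCriticalClique G2 S2 → G2.IsClique Set.univ) :
    Is3LeafPower (joinComp G1 G2 S1 S2) := by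
  obtain ⟨hm1, ht1⟩ := hL1.isCliqueModule_and_adjNeighborsAreTwins hcrit1
  obtain ⟨hm2, ht2⟩ := hL2.isCliqueModule_and_adjNeighborsAreTwins hcrit2
  have hJ := isJoinLabelling_joinComp hm1 hm2 ht1 ht2
  exact ⟨isJoinRigid_bull.isEmpty_embedding_joinComp hJ hL1.1 hL2.1,
    isJoinRigid_dart.isEmpty_embedding_joinComp hJ hL1.2.1 hL2.2.1,
    isJoinRigid_gem.isEmpty_embedding_joinComp hJ hL1.2.2.1 hL2.2.2.1,
    fun n hn => (isJoinRigid_cycleGraph hn).isEmpty_embedding_joinComp hJ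
      (hL1.2.2.2 n hn) (hL2.2.2.2 n hn)⟩

theorem joinComp_threeLeafPower_of_cliques {V1 V2 : Type*}
    (G1 : SimpleGraph V1) (G2 : SimpleGraph V2)
    (h1 : G1.Connected) (h2 : G2.Connected)
    (hL1 : Is3LeafPower G1) (hL2 : Is3LeafPower G2)
    (S1 : Set V1) (S2 : Set V2) (hS1 : S1.Nonempty) (hS2 : S2.Nonempty)
    (hc1 : G1.IsClique S1) (hc2 : G2.IsClique S2)
    (hcrit1 : ¬ IsCriticalClique G1 S1 → G1.IsClique Set.univ)
    (hcrit2 : ¬ IsCriticalClique G2 S2 → G2.IsClique Set.univ) :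
    Is3LeafPower (joinComp G1 G2 S1 S2) :=
  joinComp_threeLeafPower_of_cliques_general G1 G2 hL1 hL2 S1 S2 hcrit1 hcrit2
end

section
/- If S1 is not a clique in G1 (a connected 3-leaf power) and H = (G1,S1) ⊗ (G2,S2) is a 3-leaf power with G2 connected, then G2 is a clique, S2 = V(G2), and there is a vertex u in G1 with S1 = N(u) ∪ {u}. -/
open SimpleGraph

/-! Among the nonadjacent pairs of `S1`, take one at minimal distance in `G1` and a geodesic
between them. An interior vertex of the geodesic lying in `S1` would give a closer pair, unless the
geodesic has length two; and if no interior vertex lies in `S1`, the geodesic closes a hole with any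
vertex of `S2`. So `S1` contains an induced path `a - c - b`. Every vertex of `S2` sees `a` and
`b`, hence two nonadjacent vertices of `S2` would form a `C4` with them, and an edge of `G2`
leaving `S2` would complete a dart. Finally, a vertex of `S1` other than `c` not adjacent to `c`,
or a neighbour of `c` outside `S1`, yields a `C4`, a gem or a dart according to its adjacencies to
`a` and `b`; so `S1` is the closed neighbourhood of `c`. -/

namespace SimpleGraph

variable {V W : Type*}

def HoleFree (H : SimpleGraph V) : Prop := ∀ n, 4 ≤ n → IsEmpty (cycleGraph n ↪g H)

variable {H : SimpleGraph V}

theorem nonempty_embedding_of_adj_iff {F : SimpleGraph W} {f : W → V} (hf : f.Injective)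
    (hadj : ∀ i j, H.Adj (f i) (f j) ↔ F.Adj i j) : Nonempty (F ↪g H) :=
  ⟨⟨⟨f, hf⟩, hadj _ _⟩⟩

theorem false_of_induced_dart (hH : IsEmpty (dart ↪g H)) {p0 p1 p2 p3 p4 : V}
    (a02 : H.Adj p0 p2) (a03 : H.Adj p0 p3) (a12 : H.Adj p1 p2) (a13 : H.Adj p1 p3)
    (a23 : H.Adj p2 p3) (a24 : H.Adj p2 p4)
    (n01 : ¬H.Adj p0 p1) (n04 : ¬H.Adj p0 p4) (n14 : ¬H.Adj p1 p4) (n34 : ¬H.Adj p3 p4)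
    (d01 : p0 ≠ p1) (d04 : p0 ≠ p4) (d14 : p1 ≠ p4) (d34 : p3 ≠ p4) : False := by
  have := a02.ne; have := a03.ne; have := a12.ne; have := a13.ne; have := a23.ne; have := a24.ne
  refine (nonempty_embedding_of_adj_iff (f := ![p0, p1, p2, p3, p4]) ?_ ?_).elim hH.false
  · intro i j hij
    fin_cases i <;> fin_cases j <;> simp_all [eq_comm]
  · intro i j
    fin_cases i <;> fin_cases j <;> simp [dart, fromRel_adj, *, H.adj_comm]

theorem false_of_induced_gem (hH : IsEmpty (gem ↪g H)) {p0 p1 p2 p3 p4 : V}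
    (a01 : H.Adj p0 p1) (a12 : H.Adj p1 p2) (a23 : H.Adj p2 p3)
    (a04 : H.Adj p0 p4) (a14 : H.Adj p1 p4) (a24 : H.Adj p2 p4) (a34 : H.Adj p3 p4)
    (n02 : ¬H.Adj p0 p2) (n03 : ¬H.Adj p0 p3) (n13 : ¬H.Adj p1 p3)
    (d02 : p0 ≠ p2) (d03 : p0 ≠ p3) (d13 : p1 ≠ p3) : False := by
  have := a01.ne; have := a12.ne; have := a23.ne
  have := a04.ne; have := a14.ne; have := a24.ne; have := a34.ne
  refine (nonempty_embedding_of_adj_iff (f := ![p0, p1, p2, p3, p4]) ?_ ?_).elim hH.false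
  · intro i j hij
    fin_cases i <;> fin_cases j <;> simp_all [eq_comm]
  · intro i j
    fin_cases i <;> fin_cases j <;> simp [gem, fromRel_adj, *, H.adj_comm]

theorem cycleGraph_adj_iff_val {n : ℕ} {u v : Fin (n + 2)} :
    (cycleGraph (n + 2)).Adj u v ↔ v.val = u.val + 1 ∨ u.val = v.val + 1 ∨
      (u.val = 0 ∧ v.val = n + 1) ∨ (v.val = 0 ∧ u.val = n + 1) := by
  rw [cycleGraph_adj, sub_eq_iff_eq_add', sub_eq_iff_eq_add', Fin.ext_iff, Fin.ext_iff,
    Fin.val_add_one, Fin.val_add_one]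
  have := u.2; have := v.2
  split_ifs <;> simp only [Fin.ext_iff, Fin.val_last] at * <;> omega

theorem HoleFree.false_of_induced_c4 (hH : H.HoleFree) {p0 p1 p2 p3 : V}
    (a01 : H.Adj p0 p1) (a12 : H.Adj p1 p2) (a23 : H.Adj p2 p3) (a03 : H.Adj p0 p3)
    (n02 : ¬H.Adj p0 p2) (n13 : ¬H.Adj p1 p3) (d02 : p0 ≠ p2) (d13 : p1 ≠ p3) : False := by
  have := a01.ne; have := a12.ne; have := a23.ne; have := a03.ne
  refine (nonempty_embedding_of_adj_iff (f := ![p0, p1, p2, p3]) ?_ ?_).elim (hH 4 le_rfl).false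
  · intro i j hij
    fin_cases i <;> fin_cases j <;> simp_all [eq_comm]
  · intro i j
    rw [cycleGraph_adj_iff_val]
    fin_cases i <;> fin_cases j <;> simp [*, H.adj_comm]

theorem HoleFree.false_of_inducedPath_of_apex (hH : H.HoleFree) {k : ℕ} (hk : 2 ≤ k)
    {g : ℕ → V} {s : V}
    (hg_inj : ∀ i ≤ k, ∀ j ≤ k, g i = g j → i = j)
    (hg_adj : ∀ i ≤ k, ∀ j ≤ k, H.Adj (g i) (g j) ↔ j = i + 1 ∨ i = j + 1)
    (hs_ne : ∀ i ≤ k, g i ≠ s) (hs_adj : ∀ i ≤ k, H.Adj (g i) s ↔ i = 0 ∨ i = k) : False := by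
  let f : Fin (k + 2) → V := fun i => if i.val ≤ k then g i else s
  refine (nonempty_embedding_of_adj_iff (f := f) ?_ ?_).elim (hH (k + 2) (by omega)).false
  · intro i j hij
    have := i.2; have := j.2
    by_cases hi : i.val ≤ k <;> by_cases hj : j.val ≤ k <;>
      simp only [f, hi, hj, if_true, if_false] at hij
    · exact Fin.ext (hg_inj _ hi _ hj hij)
    · exact absurd hij (hs_ne _ hi)
    · exact absurd hij.symm (hs_ne _ hj)
    · exact Fin.ext (by omega)
  · intro i j
    have := i.2; have := j.2
    rw [cycleGraph_adj_iff_val]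
    by_cases hi : i.val ≤ k <;> by_cases hj : j.val ≤ k <;> simp only [f, hi, hj, if_true, if_false]
    · rw [hg_adj _ hi _ hj]; omega
    · rw [hs_adj _ hi]; omega
    · rw [H.adj_comm, hs_adj _ hj]; omega
    · simp only [SimpleGraph.irrefl, false_iff]; omega

variable {G : SimpleGraph V}

theorem ne_and_not_adj_of_one_lt_dist {x y : V} (h : 1 < G.dist x y) : x ≠ y ∧ ¬G.Adj x y :=
  ⟨by rintro rfl; simp at h, fun hxy => by rw [dist_eq_one_iff_adj.mpr hxy] at h; omega⟩

theorem exists_not_adj_of_not_isClique {S : Set V} (h : ¬G.IsClique S) :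
    ∃ a ∈ S, ∃ b ∈ S, a ≠ b ∧ ¬G.Adj a b := by
  simpa [isClique_iff, Set.Pairwise] using h

namespace Walk

variable {u v : V} {p : G.Walk u v}

theorem dist_getVert_of_length_eq_dist (hp : p.length = G.dist u v) {i j : ℕ} (hij : i ≤ j)
    (hj : j ≤ p.length) : G.dist (p.getVert i) (p.getVert j) = j - i := by
  have h := length_eq_dist_of_subwalk hp (((p.drop i).isSubwalk_take (j - i)).trans
    (p.isSubwalk_drop i))
  rw [take_length, drop_length, drop_getVert, Nat.add_sub_cancel' hij] at h
  omega

theorem adj_getVert_iff_of_length_eq_dist (hp : p.length = G.dist u v) {i j : ℕ}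
    (hi : i ≤ p.length) (hj : j ≤ p.length) :
    G.Adj (p.getVert i) (p.getVert j) ↔ j = i + 1 ∨ i = j + 1 := by
  rw [← dist_eq_one_iff_adj]
  rcases le_total i j with hij | hji
  · rw [dist_getVert_of_length_eq_dist hp hij hj]; omega
  · rw [dist_comm, dist_getVert_of_length_eq_dist hp hji hi]; omega

theorem eq_of_getVert_eq_of_length_eq_dist (hp : p.length = G.dist u v) {i j : ℕ}
    (hi : i ≤ p.length) (hj : j ≤ p.length) (h : p.getVert i = p.getVert j) : i = j := by
  have hd := congrArg (G.dist (p.getVert i)) h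
  rw [dist_self] at hd
  rcases le_total i j with hij | hji
  · rw [dist_getVert_of_length_eq_dist hp hij hj] at hd; omega
  · rw [dist_comm, dist_getVert_of_length_eq_dist hp hji hi] at hd; omega

end Walk

end SimpleGraph

structure InducedP3 {V : Type*} (G : SimpleGraph V) (S : Set V) (a c b : V) : Prop where
  left_mem : a ∈ S
  center_mem : c ∈ S
  right_mem : b ∈ S
  ne : a ≠ b
  not_adj : ¬G.Adj a b
  adj_left : G.Adj a c
  adj_right : G.Adj c b

namespace joinComp

variable {V1 V2 : Type*} {G1 : SimpleGraph V1} {G2 : SimpleGraph V2} {S1 : Set V1} {S2 : Set V2}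

@[simp]
theorem adj_inl_inl {x y : V1} :
    (joinComp G1 G2 S1 S2).Adj (.inl x) (.inl y) ↔ G1.Adj x y := by
  simp [joinComp, fromRel_adj, G1.adj_comm y x]
  exact fun h => h.ne

@[simp]
theorem adj_inr_inr {x y : V2} :
    (joinComp G1 G2 S1 S2).Adj (.inr x) (.inr y) ↔ G2.Adj x y := by
  simp [joinComp, fromRel_adj, G2.adj_comm y x]
  exact fun h => h.ne

@[simp]
theorem adj_inl_inr {x : V1} {y : V2} :
    (joinComp G1 G2 S1 S2).Adj (.inl x) (.inr y) ↔ x ∈ S1 ∧ y ∈ S2 := by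
  simp [joinComp, fromRel_adj]

@[simp]
theorem adj_inr_inl {x : V1} {y : V2} :
    (joinComp G1 G2 S1 S2).Adj (.inr y) (.inl x) ↔ x ∈ S1 ∧ y ∈ S2 := by
  simp [joinComp, fromRel_adj]

theorem exists_interior_getVert_mem {s : V2} (hs : s ∈ S2)
    (hH : (joinComp G1 G2 S1 S2).HoleFree) {a b : V1} (ha : a ∈ S1) (hb : b ∈ S1)
    {p : G1.Walk a b} (hp : p.length = G1.dist a b) (hlen : 1 < p.length) :
    ∃ i, 0 < i ∧ i < p.length ∧ p.getVert i ∈ S1 := by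
  by_contra! hint
  refine hH.false_of_inducedPath_of_apex (g := fun i => .inl (p.getVert i)) (s := .inr s)
    hlen ?_ ?_ (by simp) ?_
  · intro i hi j hj hij
    exact p.eq_of_getVert_eq_of_length_eq_dist hp hi hj (Sum.inl_injective hij)
  · intro i hi j hj
    rw [adj_inl_inl, p.adj_getVert_iff_of_length_eq_dist hp hi hj]
  · intro i hi
    rw [adj_inl_inr]
    constructor
    · rintro ⟨hiS, -⟩
      by_contra h
      exact hint i (by omega) (by omega) hiS
    · rintro (rfl | rfl)
      · simpa using ⟨ha, hs⟩
      · simpa using ⟨hb, hs⟩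

theorem exists_inducedP3_of_one_lt_dist (h1 : G1.Connected) {s : V2} (hs : s ∈ S2)
    (hH : (joinComp G1 G2 S1 S2).HoleFree) {a b : V1} (ha : a ∈ S1) (hb : b ∈ S1)
    (hab : 1 < G1.dist a b) : ∃ a c b, InducedP3 G1 S1 a c b := by
  induction hk : G1.dist a b using Nat.strong_induction_on generalizing a b with
  | _ k ih =>
  obtain ⟨p, hp⟩ := h1.exists_walk_length_eq_dist a b
  have hlen : p.length = k := hp.trans hk
  have hD {i j : ℕ} (hij : i ≤ j) (hj : j ≤ k) : G1.dist (p.getVert i) (p.getVert j) = j - i :=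
    p.dist_getVert_of_length_eq_dist hp hij (hlen ▸ hj)
  have hpk : p.getVert k = b := hlen ▸ p.getVert_length
  obtain ⟨i, hi0, hik, hiS⟩ := exists_interior_getVert_mem hs hH ha hb hp (by omega)
  rw [hlen] at hik
  rcases (show (i = 1 ∧ k = 2) ∨ 2 ≤ i ∨ i + 2 ≤ k by omega) with ⟨rfl, rfl⟩ | hi | hi
  · obtain ⟨hne, hnadj⟩ := ne_and_not_adj_of_one_lt_dist hab
    refine ⟨a, p.getVert 1, b, ha, hiS, hb, hne, hnadj, ?_, ?_⟩
    · simpa using p.adj_getVert_succ (i := 0) (by omega)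
    · simpa [hpk] using p.adj_getVert_succ (i := 1) (by omega)
  · have hai : G1.dist a (p.getVert i) = i := by simpa using hD (Nat.zero_le i) hik.le
    exact ih i hik ha hiS (by omega) hai
  · have hib : G1.dist (p.getVert i) b = k - i := by simpa [hpk] using hD hik.le le_rfl
    exact ih (k - i) (by omega) hiS hb (by omega) hib

theorem exists_inducedP3_of_not_isClique (h1 : G1.Connected) {s : V2} (hs : s ∈ S2)
    (hH : (joinComp G1 G2 S1 S2).HoleFree) (hnc : ¬G1.IsClique S1) :
    ∃ a c b, InducedP3 G1 S1 a c b := by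
  obtain ⟨a, ha, b, hb, hne, hnadj⟩ := exists_not_adj_of_not_isClique hnc
  exact exists_inducedP3_of_one_lt_dist h1 hs hH ha hb (h1.one_lt_dist_of_ne_of_not_adj hne hnadj)

theorem isClique_of_not_isClique (hH : (joinComp G1 G2 S1 S2).HoleFree)
    (hnc : ¬G1.IsClique S1) : G2.IsClique S2 := by
  obtain ⟨a, ha, b, hb, hne, hnadj⟩ := exists_not_adj_of_not_isClique hnc
  intro u hu v hv huv
  by_contra huv'
  apply hH.false_of_induced_c4 (p0 := .inl a) (p1 := .inr u) (p2 := .inl b) (p3 := .inr v) <;>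
    simp_all

variable {a b c : V1}

theorem eq_univ_of_inducedP3 (h2 : G2.Connected) {s : V2} (hs : s ∈ S2)
    (hH : IsEmpty (dart ↪g joinComp G1 G2 S1 S2)) (hP : InducedP3 G1 S1 a c b) :
    S2 = Set.univ := by
  refine Set.eq_univ_of_forall fun w => by_contra fun hw => ?_
  obtain ⟨d, -, hy, hx⟩ := (h2 s w).some.exists_boundary_dart S2 hs hw
  obtain ⟨ha, hc, hb, hne, hnadj, hac, hcb⟩ := hP
  apply false_of_induced_dart hH (p0 := .inl a) (p1 := .inl b) (p2 := .inr d.fst) (p3 := .inl c)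
    (p4 := .inr d.snd) <;> simp_all [G1.adj_comm]

theorem adj_of_mem_of_inducedP3 (hdart : IsEmpty (dart ↪g joinComp G1 G2 S1 S2))
    (hgem : IsEmpty (gem ↪g joinComp G1 G2 S1 S2)) (hH : (joinComp G1 G2 S1 S2).HoleFree)
    {s : V2} (hs : s ∈ S2) (hP : InducedP3 G1 S1 a c b) {d : V1} (hd : d ∈ S1) (hdc : d ≠ c) :
    G1.Adj c d := by
  obtain ⟨ha, hc, hb, hne, hnadj, hac, hcb⟩ := hP
  by_contra hcd
  have hda : d ≠ a := by rintro rfl; exact hcd hac.symm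
  have hdb : d ≠ b := by rintro rfl; exact hcd hcb
  by_cases hda' : G1.Adj d a <;> by_cases hdb' : G1.Adj d b
  · apply hH.false_of_induced_c4 (p0 := .inl a) (p1 := .inl d) (p2 := .inl b) (p3 := .inl c) <;>
      simp_all [G1.adj_comm, eq_comm]
  · apply false_of_induced_gem hgem (p0 := .inl d) (p1 := .inl a) (p2 := .inl c) (p3 := .inl b)
      (p4 := .inr s) <;> simp_all [G1.adj_comm, eq_comm]
  · apply false_of_induced_gem hgem (p0 := .inl d) (p1 := .inl b) (p2 := .inl c) (p3 := .inl a)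
      (p4 := .inr s) <;> simp_all [G1.adj_comm, eq_comm]
  · apply false_of_induced_dart hdart (p0 := .inl a) (p1 := .inl b) (p2 := .inr s) (p3 := .inl c)
      (p4 := .inl d) <;> simp_all [G1.adj_comm, eq_comm]

theorem mem_of_adj_of_inducedP3 (hdart : IsEmpty (dart ↪g joinComp G1 G2 S1 S2))
    (hgem : IsEmpty (gem ↪g joinComp G1 G2 S1 S2)) (hH : (joinComp G1 G2 S1 S2).HoleFree)
    {s : V2} (hs : s ∈ S2) (hP : InducedP3 G1 S1 a c b) {d : V1} (hcd : G1.Adj c d) :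
    d ∈ S1 := by
  obtain ⟨ha, hc, hb, hne, hnadj, hac, hcb⟩ := hP
  by_contra hd
  have hda : d ≠ a := by rintro rfl; exact hd ha
  have hdb : d ≠ b := by rintro rfl; exact hd hb
  by_cases hda' : G1.Adj d a <;> by_cases hdb' : G1.Adj d b
  · apply hH.false_of_induced_c4 (p0 := .inl a) (p1 := .inl d) (p2 := .inl b) (p3 := .inr s) <;>
      simp_all [G1.adj_comm, eq_comm]
  · apply false_of_induced_gem hgem (p0 := .inl d) (p1 := .inl a) (p2 := .inr s) (p3 := .inl b)
      (p4 := .inl c) <;> simp_all [G1.adj_comm, eq_comm]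
  · apply false_of_induced_gem hgem (p0 := .inl d) (p1 := .inl b) (p2 := .inr s) (p3 := .inl a)
      (p4 := .inl c) <;> simp_all [G1.adj_comm, eq_comm]
  · apply false_of_induced_dart hdart (p0 := .inl a) (p1 := .inl b) (p2 := .inl c) (p3 := .inr s)
      (p4 := .inl d) <;> simp_all [G1.adj_comm, eq_comm]

end joinComp

theorem joinComp_threeLeafPower_of_not_clique_general {V1 V2 : Type*}
    (G1 : SimpleGraph V1) (G2 : SimpleGraph V2)
    (h1 : G1.Connected) (h2 : G2.Connected)
    (S1 : Set V1) (S2 : Set V2) (hS2 : S2.Nonempty)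
    (hnc : ¬ G1.IsClique S1)
    (hH : Is3LeafPower (joinComp G1 G2 S1 S2)) :
    G2.IsClique Set.univ ∧ S2 = Set.univ ∧ ∃ u : V1, S1 = {x | G1.Adj u x} ∪ {u} := by
  obtain ⟨-, hdart, hgem, hholes⟩ := hH
  obtain ⟨s, hs⟩ := hS2
  obtain ⟨a, c, b, hP⟩ := joinComp.exists_inducedP3_of_not_isClique h1 hs hholes hnc
  have hS2univ := joinComp.eq_univ_of_inducedP3 h2 hs hdart hP
  refine ⟨hS2univ ▸ joinComp.isClique_of_not_isClique hholes hnc, hS2univ, c, ?_⟩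
  ext d
  simp only [Set.mem_union, Set.mem_ofPred_eq, Set.mem_singleton_iff]
  constructor
  · intro hd
    by_cases hdc : d = c
    · exact .inr hdc
    · exact .inl (joinComp.adj_of_mem_of_inducedP3 hdart hgem hholes hs hP hd hdc)
  · rintro (hcd | rfl)
    · exact joinComp.mem_of_adj_of_inducedP3 hdart hgem hholes hs hP hcd
    · exact hP.center_mem

theorem joinComp_threeLeafPower_of_not_clique {V1 V2 : Type*}
    (G1 : SimpleGraph V1) (G2 : SimpleGraph V2)
    (h1 : G1.Connected) (h2 : G2.Connected)
    (hL1 : Is3LeafPower G1)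
    (S1 : Set V1) (S2 : Set V2) (hS1 : S1.Nonempty) (hS2 : S2.Nonempty)
    (hnc : ¬ G1.IsClique S1)
    (hH : Is3LeafPower (joinComp G1 G2 S1 S2)) :
    G2.IsClique Set.univ ∧ S2 = Set.univ ∧ ∃ u : V1, S1 = {x | G1.Adj u x} ∪ {u} :=
  joinComp_threeLeafPower_of_not_clique_general G1 G2 h1 h2 S1 S2 hS2 hnc hH
end

section
/- Let C be a critical clique of a 3-leaf power G = (V,E) and S ⊆ V with C \ S nonempty. If C \ S is not a critical clique of the induced subgraph G[V \ S], then the connected component of G[V \ S] containing C \ S is a clique. -/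
open SimpleGraph

/-!
The trace `C'` of `C` on `V \ S` is a clique module of `G[V \ S]`; not being critical, it lies
strictly inside a clique module `K`, and we pick `u ∈ K \ C'`. In a 3-leaf power two adjacent
vertices complete to a critical clique are true twins, since otherwise a bull, dart, gem or `C₄`
appears. So every neighbour of `u` in `G[V \ S]` is a true twin of `u`: either it lies in `K`, or
it is complete to `C`. Hence the closed neighbourhood of `u`, which contains `C'`, is a clique
closed under adjacency, i.e. the component of `C'`.
-/

section ForbiddenPatterns

variable {V : Type*} {G : SimpleGraph V}

lemma no_induced_bull (hfree : IsEmpty (bull ↪g G)) {a b c d e : V}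
    (e1 : G.Adj a b) (e2 : G.Adj a c) (e3 : G.Adj b c) (e4 : G.Adj b d) (e5 : G.Adj c e)
    (n1 : ¬ G.Adj a d) (n2 : ¬ G.Adj a e) (n3 : ¬ G.Adj c d) (n4 : ¬ G.Adj b e)
    (n5 : ¬ G.Adj d e) : False := by
  have hadj : ∀ i j, G.Adj (![a, b, c, d, e] i) (![a, b, c, d, e] j) ↔ bull.Adj i j := by
    intro i j
    fin_cases i <;> fin_cases j <;> simp [bull, G.adj_comm, *]
  refine hfree.false ⟨⟨![a, b, c, d, e], fun i j hij => ?_⟩, hadj _ _⟩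
  fin_cases i <;> fin_cases j <;> simp at hij ⊢ <;> subst hij <;> simp_all [G.adj_comm]

lemma no_induced_dart (hfree : IsEmpty (dart ↪g G)) {a b c d p : V} (hab : a ≠ b)
    (e1 : G.Adj a c) (e2 : G.Adj a d) (e3 : G.Adj b c) (e4 : G.Adj b d) (e5 : G.Adj c d)
    (e6 : G.Adj c p)
    (n1 : ¬ G.Adj a b) (n2 : ¬ G.Adj a p) (n3 : ¬ G.Adj b p) (n4 : ¬ G.Adj d p) : False := by
  have hadj : ∀ i j, G.Adj (![a, b, c, d, p] i) (![a, b, c, d, p] j) ↔ dart.Adj i j := by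
    intro i j
    fin_cases i <;> fin_cases j <;> simp [dart, G.adj_comm, *]
  refine hfree.false ⟨⟨![a, b, c, d, p], fun i j hij => ?_⟩, hadj _ _⟩
  fin_cases i <;> fin_cases j <;> simp at hij ⊢ <;> subst hij <;> simp_all [G.adj_comm]

lemma no_induced_gem (hfree : IsEmpty (gem ↪g G)) {a b c d q : V}
    (e1 : G.Adj a b) (e2 : G.Adj b c) (e3 : G.Adj c d)
    (e4 : G.Adj a q) (e5 : G.Adj b q) (e6 : G.Adj c q) (e7 : G.Adj d q)
    (n1 : ¬ G.Adj a c) (n2 : ¬ G.Adj a d) (n3 : ¬ G.Adj b d) : False := by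
  have hadj : ∀ i j, G.Adj (![a, b, c, d, q] i) (![a, b, c, d, q] j) ↔ gem.Adj i j := by
    intro i j
    fin_cases i <;> fin_cases j <;> simp [gem, G.adj_comm, *]
  refine hfree.false ⟨⟨![a, b, c, d, q], fun i j hij => ?_⟩, hadj _ _⟩
  fin_cases i <;> fin_cases j <;> simp at hij ⊢ <;> subst hij <;> simp_all [G.adj_comm]

lemma no_induced_c4 (hfree : IsEmpty (cycleGraph 4 ↪g G)) {a b c d : V}
    (hac : a ≠ c) (hbd : b ≠ d)
    (e1 : G.Adj a b) (e2 : G.Adj b c) (e3 : G.Adj c d) (e4 : G.Adj a d)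
    (n1 : ¬ G.Adj a c) (n2 : ¬ G.Adj b d) : False := by
  have hadj : ∀ i j, G.Adj (![a, b, c, d] i) (![a, b, c, d] j) ↔ (cycleGraph 4).Adj i j := by
    intro i j
    fin_cases i <;> fin_cases j <;> simp +decide [G.adj_comm, *]
  refine hfree.false ⟨⟨![a, b, c, d], fun i j hij => ?_⟩, hadj _ _⟩
  fin_cases i <;> fin_cases j <;> simp at hij ⊢ <;> subst hij <;> simp_all [G.adj_comm]

end ForbiddenPatterns

def TrueTwins {V : Type*} (G : SimpleGraph V) (u v : V) : Prop :=
  G.Adj u v ∧ ∀ z, z ≠ u → z ≠ v → (G.Adj z u ↔ G.Adj z v)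

section TrueTwins

variable {V W : Type*} {G : SimpleGraph V}

lemma TrueTwins.comap {f : W ↪ V} {a b : W} (h : TrueTwins G (f a) (f b)) :
    TrueTwins (G.comap f) a b :=
  ⟨h.1, fun z hza hzb => h.2 (f z) (f.injective.ne hza) (f.injective.ne hzb)⟩

lemma IsCliqueModule.comap {f : W ↪ V} {K : Set V} (hK : IsCliqueModule G K) :
    IsCliqueModule (G.comap f) (f ⁻¹' K) :=
  ⟨fun _ ha _ hb hab => hK.1 ha hb (f.injective.ne hab),
    fun x hx y hy z hz => hK.2 (f x) hx (f y) hy (f z) hz⟩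

lemma IsCliqueModule.trueTwins {K : Set V} (hK : IsCliqueModule G K) {a b : V}
    (ha : a ∈ K) (hb : b ∈ K) (hab : a ≠ b) : TrueTwins G a b := by
  refine ⟨hK.1 ha hb hab, fun z hza hzb => ?_⟩
  by_cases hz : z ∈ K
  · exact iff_of_true (hK.1 hz ha hza) (hK.1 hz hb hzb)
  · simpa only [G.adj_comm z] using hK.2 a ha b hb z hz

lemma IsCliqueModule.forall_adj_of_adj {K : Set V} (hK : IsCliqueModule G K) {x z : V}
    (hx : x ∈ K) (hz : z ∉ K) (hzx : G.Adj z x) : ∀ c ∈ K, G.Adj z c :=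
  fun c hc => ((hK.2 x hx c hc z hz).mp hzx.symm).symm

lemma IsCliqueModule.exists_ssuperset_of_not_isCriticalClique {K : Set V}
    (hK : IsCliqueModule G K) (hne : K.Nonempty) (hnc : ¬ IsCriticalClique G K) :
    ∃ K', IsCliqueModule G K' ∧ K ⊂ K' := by
  by_contra! h
  exact hnc ⟨hne, hK, fun K' hK' hsub => (hsub.eq_or_ssubset.resolve_right (h K' hK')).symm⟩

/-- Otherwise `insert t C` would be a larger clique module. -/
lemma IsCriticalClique.mem_of_trueTwins {C : Set V} (hC : IsCriticalClique G C) {t c : V}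
    (hc : c ∈ C) (htc : TrueTwins G t c) : t ∈ C := by
  have htC : ∀ d ∈ C, d ≠ t → G.Adj d t := fun d hd hdt => by
    by_cases hdc : d = c
    · exact hdc ▸ htc.1.symm
    · exact (htc.2 d hdt hdc).mpr (hC.2.1.1 hd hc hdc)
  have hmod : IsCliqueModule G (insert t C) := by
    refine ⟨?_, fun x hx y hy z hz => ?_⟩
    · exact hC.2.1.1.insert fun d hd hdt => (htC d hd hdt.symm).symm
    · rw [Set.mem_insert_iff, not_or] at hz
      have hc_adj : ∀ e ∈ insert t C, G.Adj e z ↔ G.Adj c z := by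
        rintro e (rfl | he)
        · simpa only [G.adj_comm z] using htc.2 z hz.1 (fun h => hz.2 (h ▸ hc))
        · exact hC.2.1.2 e he c hc z hz.2
      exact (hc_adj x hx).trans (hc_adj y hy).symm
  exact hC.2.2 _ hmod (Set.subset_insert t C) ▸ Set.mem_insert t C

lemma TrueTwins.adj_of_adj {u a b : V} (ha : TrueTwins G u a) (hab : b ≠ a) (hbu : G.Adj b u) :
    G.Adj b a :=
  (ha.2 b hbu.ne hab).mp hbu

end TrueTwins

namespace Is3LeafPower

variable {V : Type*} {G : SimpleGraph V}

lemma adj_of_adj_of_diamond (hG : Is3LeafPower G) {a b c d y : V} (hab : a ≠ b)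
    (nab : ¬ G.Adj a b) (hac : G.Adj a c) (had : G.Adj a d) (hbc : G.Adj b c)
    (hbd : G.Adj b d) (hcd : G.Adj c d) (hyd : y ≠ d) (hyc : G.Adj y c) : G.Adj y d := by
  obtain ⟨-, hdart, hgem, hcycle⟩ := hG
  by_contra nyd
  by_cases hya : G.Adj y a <;> by_cases hyb : G.Adj y b
  · exact no_induced_c4 (hcycle 4 le_rfl) hyd.symm hab had.symm hya.symm hyb hbd.symm
      (fun h => nyd h.symm) nab
  · exact no_induced_gem hgem hbd had.symm hya.symm hbc hcd.symm hac hyc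
      (fun h => nab h.symm) (fun h => hyb h.symm) (fun h => nyd h.symm)
  · exact no_induced_gem hgem had hbd.symm hyb.symm hac hcd.symm hbc hyc
      nab (fun h => hya h.symm) (fun h => nyd h.symm)
  · exact no_induced_dart hdart hab hac had hbc hbd hcd hyc.symm
      nab (fun h => hya h.symm) (fun h => hyb h.symm) (fun h => nyd h.symm)

lemma trueTwins_of_diamond (hG : Is3LeafPower G) {a b c d : V} (hab : a ≠ b)
    (nab : ¬ G.Adj a b) (hac : G.Adj a c) (had : G.Adj a d) (hbc : G.Adj b c)
    (hbd : G.Adj b d) (hcd : G.Adj c d) : TrueTwins G c d :=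
  ⟨hcd, fun _ hyc hyd => ⟨hG.adj_of_adj_of_diamond hab nab hac had hbc hbd hcd hyd,
    hG.adj_of_adj_of_diamond hab nab had hac hbd hbc hcd.symm hyc⟩⟩

lemma adj_of_adj_of_pendant (hG : Is3LeafPower G) {a b c p x : V} (hab : G.Adj a b)
    (hac : G.Adj a c) (hbc : G.Adj b c) (hcp : G.Adj c p) (nap : ¬ G.Adj a p)
    (nbp : ¬ G.Adj b p) (hxb : x ≠ b) (hxa : G.Adj x a) : G.Adj x b := by
  obtain ⟨hbull, hdart, hgem, hcycle⟩ := hG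
  by_contra nxb
  by_cases hxc : G.Adj x c <;> by_cases hxp : G.Adj x p
  · exact no_induced_gem hgem hab.symm hxa.symm hxp hbc hac hxc hcp.symm
      (fun h => nxb h.symm) nbp nap
  · exact no_induced_dart hdart hxb.symm hbc hab.symm hxc hxa hac.symm hcp
      (fun h => nxb h.symm) nbp hxp nap
  · exact no_induced_c4 (hcycle 4 le_rfl) (G.ne_of_adj_of_not_adj hab fun h => nbp h.symm)
      (G.ne_of_adj_of_not_adj hbc.symm nxb).symm hxa.symm hxp hcp.symm hac nap hxc
  · exact no_induced_bull hbull hab.symm hbc hac hxa.symm hcp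
      (fun h => nxb h.symm) nbp (fun h => hxc h.symm) nap hxp

lemma trueTwins_of_pendant (hG : Is3LeafPower G) {a b c p : V} (hab : G.Adj a b)
    (hac : G.Adj a c) (hbc : G.Adj b c) (hcp : G.Adj c p) (nap : ¬ G.Adj a p)
    (nbp : ¬ G.Adj b p) : TrueTwins G a b :=
  ⟨hab, fun _ hxa hxb => ⟨hG.adj_of_adj_of_pendant hab hac hbc hcp nap nbp hxb,
    hG.adj_of_adj_of_pendant hab.symm hbc hac hcp nbp nap hxa⟩⟩

/-- A vertex `v` seeing `w` but not `u` would form, with some `c ∈ C`, an induced diamond or a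
triangle with a pendant vertex, making a vertex outside `C` a true twin of `c`. -/
lemma adj_of_adj_of_forall_adj (hG : Is3LeafPower G) {C : Set V} (hC : IsCriticalClique G C)
    {u w v : V} (huC : ∀ c ∈ C, G.Adj u c) (hwC : ∀ c ∈ C, G.Adj w c) (huw : G.Adj u w)
    (hvu : v ≠ u) (hvw : G.Adj v w) : G.Adj v u := by
  obtain ⟨c, hc⟩ := hC.1
  by_contra nvu
  by_cases hvc : G.Adj v c
  · have hw_mem := hC.mem_of_trueTwins hc
      (hG.trueTwins_of_diamond hvu.symm (fun h => nvu h.symm) huw (huC c hc) hvw hvc (hwC c hc))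
    exact G.irrefl (hwC w hw_mem)
  · have hu_mem := hC.mem_of_trueTwins hc (hG.trueTwins_of_pendant (huC c hc) huw
      (hwC c hc).symm hvw.symm (fun h => nvu h.symm) (fun h => hvc h.symm))
    exact G.irrefl (huC u hu_mem)

lemma trueTwins_of_forall_adj (hG : Is3LeafPower G) {C : Set V} (hC : IsCriticalClique G C)
    {u w : V} (huC : ∀ c ∈ C, G.Adj u c) (hwC : ∀ c ∈ C, G.Adj w c) (huw : G.Adj u w) :
    TrueTwins G u w :=
  ⟨huw, fun _ hvu hvw => ⟨hG.adj_of_adj_of_forall_adj hC hwC huC huw.symm hvw,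
    hG.adj_of_adj_of_forall_adj hC huC hwC huw hvu⟩⟩

end Is3LeafPower

section Components

variable {W : Type*} {H : SimpleGraph W}

lemma SimpleGraph.connectedComponentMk_supp_subset_of_forall_adj {N : Set W} {u : W}
    (hu : u ∈ N) (hN : ∀ a ∈ N, ∀ b, H.Adj a b → b ∈ N) :
    (H.connectedComponentMk u).supp ⊆ N := by
  intro v hv
  obtain ⟨p⟩ := ConnectedComponent.exact hv
  suffices ∀ {a b : W}, H.Walk a b → a ∈ N → b ∈ N from this p.reverse hu
  intro a b p
  induction p with
  | nil => exact id
  | cons hadj _ ih => exact fun ha => ih (hN _ ha _ hadj)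

/-- The closed neighbourhood of `u` is a clique closed under adjacency. -/
lemma isClique_supp_of_forall_adj_trueTwins {u : W} (h : ∀ a, H.Adj u a → TrueTwins H u a) :
    H.IsClique (H.connectedComponentMk u).supp := by
  have hclosed : ∀ a ∈ insert u (H.neighborSet u), ∀ b, H.Adj a b →
      b ∈ insert u (H.neighborSet u) := by
    rintro a (rfl | hua) b hab
    · exact Or.inr hab
    · by_cases hbu : b = u
      · exact Or.inl hbu
      · exact Or.inr (((h a hua).2 b hbu hab.ne').mpr hab.symm).symm
  refine IsClique.subset (connectedComponentMk_supp_subset_of_forall_adj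
    (Set.mem_insert u _) hclosed) ?_
  rintro a (rfl | hua) b (rfl | hub) hab
  · exact absurd rfl hab
  · exact hub
  · exact hua.symm
  · exact (h b hub).adj_of_adj hab hua.symm

end Components

theorem component_isClique_of_not_criticalClique_general {V : Type*} (G : SimpleGraph V)
    (hG : Is3LeafPower G) (C : Set V) (hC : IsCriticalClique G C) (S : Set V)
    (hnc : ¬ IsCriticalClique (G.induce Sᶜ) {x : ↥(Sᶜ) | ↑x ∈ C}) :
    ∀ x : ↥(Sᶜ), (↑x ∈ C) →
      (G.induce Sᶜ).IsClique ((G.induce Sᶜ).connectedComponentMk x).supp := by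
  intro x hx
  obtain ⟨K, hK, hCK⟩ :=
    (hC.2.1.comap (f := .subtype _)).exists_ssuperset_of_not_isCriticalClique ⟨x, hx⟩ hnc
  obtain ⟨u, huK, huC⟩ := Set.exists_of_ssubset hCK
  have hxK : x ∈ K := hCK.subset hx
  have hux : u ≠ x := fun h => huC (h ▸ hx)
  have hu_adj_C : ∀ c ∈ C, G.Adj u c := hC.2.1.forall_adj_of_adj hx huC (hK.1 huK hxK hux)
  have htwins : ∀ a, (G.induce Sᶜ).Adj u a → TrueTwins (G.induce Sᶜ) u a := by
    intro a hua
    by_cases ha : ↑a ∈ C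
    · exact hK.trueTwins huK (hCK.subset ha) hua.ne
    · have hax : G.Adj a x :=
        ((hK.trueTwins huK hxK hux).2 a hua.ne' fun h => ha (h ▸ hx)).mp hua.symm
      exact (hG.trueTwins_of_forall_adj hC hu_adj_C (hC.2.1.forall_adj_of_adj hx ha hax)
        hua).comap
  rw [ConnectedComponent.eq.mpr (hK.1 hxK huK hux.symm).reachable]
  exact isClique_supp_of_forall_adj_trueTwins htwins

theorem component_isClique_of_not_criticalClique {V : Type*} (G : SimpleGraph V)
    (hG : Is3LeafPower G) (C : Set V) (hC : IsCriticalClique G C) (S : Set V)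
    (hne : (C \ S).Nonempty)
    (hnc : ¬ IsCriticalClique (G.induce Sᶜ) {x : ↥(Sᶜ) | ↑x ∈ C}) :
    ∀ x : ↥(Sᶜ), (↑x ∈ C) →
      (G.induce Sᶜ).IsClique ((G.induce Sᶜ).connectedComponentMk x).supp :=
  component_isClique_of_not_criticalClique_general G hG C hC S hnc
end

section
/- Every cycle C of length at least 5 in a 3-leaf power G contains four distinct vertices a, b, c, d appearing in this order along C, with ab and cd edges of C, such that ad, ac, and bd are all edges of G. -/
open SimpleGraph

/-- Build a graph embedding from a vertex map with a complete adjacency pattern. -/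
def embed_of_pattern {α V : Type*} {H : SimpleGraph α} {G : SimpleGraph V} (v : α → V)
    (hinj : Function.Injective v)
    (h1 : ∀ a b, H.Adj a b → G.Adj (v a) (v b))
    (h2 : ∀ a b, a ≠ b → ¬ H.Adj a b → ¬ G.Adj (v a) (v b)) : H ↪g G :=
  ⟨⟨v, hinj⟩, @fun a b => ⟨fun hg => by
      by_contra hH
      exact h2 a b (fun hab => hg.ne (by rw [hab])) hH hg,
    h1 a b⟩⟩

lemma bull_false {V : Type*} {G : SimpleGraph V} (x0 x1 x2 x3 x4 : V)
    (i03 : x0 ≠ x3) (i04 : x0 ≠ x4) (i14 : x1 ≠ x4) (i23 : x2 ≠ x3) (i34 : x3 ≠ x4)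
    (e01 : G.Adj x0 x1) (e02 : G.Adj x0 x2) (e12 : G.Adj x1 x2)
    (e13 : G.Adj x1 x3) (e24 : G.Adj x2 x4)
    (n03 : ¬G.Adj x0 x3) (n04 : ¬G.Adj x0 x4) (n14 : ¬G.Adj x1 x4)
    (n23 : ¬G.Adj x2 x3) (n34 : ¬G.Adj x3 x4)
    (hIs : IsEmpty (bull ↪g G)) : False := by
  apply hIs.false
  have e10 := e01.symm; have e20 := e02.symm; have e21 := e12.symm
  have e31 := e13.symm; have e42 := e24.symm
  have n30 : ¬G.Adj x3 x0 := fun h => n03 h.symm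
  have n40 : ¬G.Adj x4 x0 := fun h => n04 h.symm
  have n41 : ¬G.Adj x4 x1 := fun h => n14 h.symm
  have n32 : ¬G.Adj x3 x2 := fun h => n23 h.symm
  have n43 : ¬G.Adj x4 x3 := fun h => n34 h.symm
  have i01 := e01.ne; have i02 := e02.ne; have i12 := e12.ne
  have i13 := e13.ne; have i24 := e24.ne
  have i10 := i01.symm; have i20 := i02.symm; have i21 := i12.symm
  have i31 := i13.symm; have i42 := i24.symm
  have i30 := i03.symm; have i40 := i04.symm; have i41 := i14.symm
  have i32 := i23.symm; have i43 := i34.symm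
  refine embed_of_pattern ![x0,x1,x2,x3,x4] ?_ ?_ ?_
  · intro a b h
    fin_cases a <;> fin_cases b <;>
      simp only [Matrix.cons_val_zero, Matrix.cons_val_one, Matrix.head_cons,
        Matrix.cons_val_two, Matrix.tail_cons, Matrix.cons_val_three, Matrix.cons_val_four] at h <;>
      first | rfl | exact absurd h (by assumption)
  · intro a b h
    fin_cases a <;> fin_cases b <;>
      first | exact absurd h (by rw [bull, SimpleGraph.fromRel_adj] at h ⊢; decide) | assumption
  · intro a b hne h
    fin_cases a <;> fin_cases b <;>
      first | exact absurd rfl hne | exact absurd (by rw [bull, SimpleGraph.fromRel_adj]; decide) h | assumption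

lemma dart_false {V : Type*} {G : SimpleGraph V} (x0 x1 x2 x3 x4 : V)
    (i01 : x0 ≠ x1) (i04 : x0 ≠ x4) (i14 : x1 ≠ x4) (i34 : x3 ≠ x4)
    (e02 : G.Adj x0 x2) (e03 : G.Adj x0 x3) (e12 : G.Adj x1 x2)
    (e13 : G.Adj x1 x3) (e23 : G.Adj x2 x3) (e24 : G.Adj x2 x4)
    (n01 : ¬G.Adj x0 x1) (n04 : ¬G.Adj x0 x4) (n14 : ¬G.Adj x1 x4)
    (n34 : ¬G.Adj x3 x4)
    (hIs : IsEmpty (dart ↪g G)) : False := by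
  apply hIs.false
  have e20 := e02.symm; have e30 := e03.symm; have e21 := e12.symm
  have e31 := e13.symm; have e32 := e23.symm; have e42 := e24.symm
  have n10 : ¬G.Adj x1 x0 := fun h => n01 h.symm
  have n40 : ¬G.Adj x4 x0 := fun h => n04 h.symm
  have n41 : ¬G.Adj x4 x1 := fun h => n14 h.symm
  have n43 : ¬G.Adj x4 x3 := fun h => n34 h.symm
  have i02 := e02.ne; have i03 := e03.ne; have i12 := e12.ne
  have i13 := e13.ne; have i23 := e23.ne; have i24 := e24.ne
  have i20 := i02.symm; have i30 := i03.symm; have i21 := i12.symm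
  have i31 := i13.symm; have i32 := i23.symm; have i42 := i24.symm
  have i10 := i01.symm; have i40 := i04.symm; have i41 := i14.symm
  have i43 := i34.symm
  refine embed_of_pattern ![x0,x1,x2,x3,x4] ?_ ?_ ?_
  · intro a b h
    fin_cases a <;> fin_cases b <;>
      simp only [Matrix.cons_val_zero, Matrix.cons_val_one, Matrix.head_cons,
        Matrix.cons_val_two, Matrix.tail_cons, Matrix.cons_val_three, Matrix.cons_val_four] at h <;>
      first | rfl | exact absurd h (by assumption)
  · intro a b h
    fin_cases a <;> fin_cases b <;>
      first | exact absurd h (by rw [dart, SimpleGraph.fromRel_adj] at h ⊢; decide) | assumption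
  · intro a b hne h
    fin_cases a <;> fin_cases b <;>
      first | exact absurd rfl hne | exact absurd (by rw [dart, SimpleGraph.fromRel_adj]; decide) h | assumption

lemma gem_false {V : Type*} {G : SimpleGraph V} (x0 x1 x2 x3 x4 : V)
    (i02 : x0 ≠ x2) (i03 : x0 ≠ x3) (i13 : x1 ≠ x3)
    (e01 : G.Adj x0 x1) (e12 : G.Adj x1 x2) (e23 : G.Adj x2 x3)
    (e04 : G.Adj x0 x4) (e14 : G.Adj x1 x4) (e24 : G.Adj x2 x4) (e34 : G.Adj x3 x4)
    (n02 : ¬G.Adj x0 x2) (n03 : ¬G.Adj x0 x3) (n13 : ¬G.Adj x1 x3)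
    (hIs : IsEmpty (gem ↪g G)) : False := by
  apply hIs.false
  have e10 := e01.symm; have e21 := e12.symm; have e32 := e23.symm
  have e40 := e04.symm; have e41 := e14.symm; have e42 := e24.symm; have e43 := e34.symm
  have n20 : ¬G.Adj x2 x0 := fun h => n02 h.symm
  have n30 : ¬G.Adj x3 x0 := fun h => n03 h.symm
  have n31 : ¬G.Adj x3 x1 := fun h => n13 h.symm
  have i01 := e01.ne; have i12 := e12.ne; have i23 := e23.ne
  have i04 := e04.ne; have i14 := e14.ne; have i24 := e24.ne; have i34 := e34.ne
  have i10 := i01.symm; have i21 := i12.symm; have i32 := i23.symm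
  have i40 := i04.symm; have i41 := i14.symm; have i42 := i24.symm; have i43 := i34.symm
  have i20 := i02.symm; have i30 := i03.symm; have i31 := i13.symm
  refine embed_of_pattern ![x0,x1,x2,x3,x4] ?_ ?_ ?_
  · intro a b h
    fin_cases a <;> fin_cases b <;>
      simp only [Matrix.cons_val_zero, Matrix.cons_val_one, Matrix.head_cons,
        Matrix.cons_val_two, Matrix.tail_cons, Matrix.cons_val_three, Matrix.cons_val_four] at h <;>
      first | rfl | exact absurd h (by assumption)
  · intro a b h
    fin_cases a <;> fin_cases b <;>
      first | exact absurd h (by rw [gem, SimpleGraph.fromRel_adj] at h ⊢; decide) | assumption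
  · intro a b hne h
    fin_cases a <;> fin_cases b <;>
      first | exact absurd rfl hne | exact absurd (by rw [gem, SimpleGraph.fromRel_adj]; decide) h | assumption

lemma c4_false {V : Type*} {G : SimpleGraph V} (x0 x1 x2 x3 : V)
    (i02 : x0 ≠ x2) (i13 : x1 ≠ x3)
    (e01 : G.Adj x0 x1) (e12 : G.Adj x1 x2) (e23 : G.Adj x2 x3) (e30 : G.Adj x3 x0)
    (n02 : ¬G.Adj x0 x2) (n13 : ¬G.Adj x1 x3)
    (hIs : IsEmpty (SimpleGraph.cycleGraph 4 ↪g G)) : False := by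
  apply hIs.false
  have e10 := e01.symm; have e21 := e12.symm; have e32 := e23.symm; have e03 := e30.symm
  have n20 : ¬G.Adj x2 x0 := fun h => n02 h.symm
  have n31 : ¬G.Adj x3 x1 := fun h => n13 h.symm
  have i01 := e01.ne; have i12 := e12.ne; have i23 := e23.ne; have i30 := e30.ne
  have i10 := i01.symm; have i21 := i12.symm; have i32 := i23.symm; have i03 := i30.symm
  have i20 := i02.symm; have i31 := i13.symm
  refine embed_of_pattern ![x0,x1,x2,x3] ?_ ?_ ?_
  · intro a b h
    fin_cases a <;> fin_cases b <;>
      simp only [Matrix.cons_val_zero, Matrix.cons_val_one, Matrix.head_cons,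
        Matrix.cons_val_two, Matrix.tail_cons, Matrix.cons_val_three] at h <;>
      first | rfl | exact absurd h (by assumption)
  · intro a b h
    fin_cases a <;> fin_cases b <;>
      first | exact absurd h (by decide) | assumption
  · intro a b hne h
    fin_cases a <;> fin_cases b <;>
      first | exact absurd rfl hne | exact absurd (by decide : (SimpleGraph.cycleGraph 4).Adj _ _) h | assumption

lemma fin_sub_val {N : ℕ} (s t : Fin N) :
    (s - t).val = if t.val ≤ s.val then s.val - t.val else N - (t.val - s.val) := by
  have hs := s.isLt
  have ht := t.isLt
  rw [Fin.sub_def]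
  show (N - t.val + s.val) % N = _
  split
  · next h =>
    have : N - t.val + s.val = N + (s.val - t.val) := by omega
    rw [this, Nat.add_mod_left, Nat.mod_eq_of_lt (by omega)]
  · next h =>
    rw [Nat.mod_eq_of_lt (by omega)]
    omega

theorem cycle_in_threeLeafPower_has_crossing_chords {V : Type*} (G : SimpleGraph V)
    (hG : Is3LeafPower G) (n : ℕ) (hn : 5 ≤ n)
    (f : ZMod n → V) (hinj : Function.Injective f)
    (hadj : ∀ i : ZMod n, G.Adj (f i) (f (i + 1))) :
    ∃ i j : ZMod n,
      f i ≠ f j ∧ f i ≠ f (j + 1) ∧ f (i + 1) ≠ f j ∧ f (i + 1) ≠ f (j + 1) ∧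
      G.Adj (f i) (f (j + 1)) ∧ G.Adj (f i) (f j) ∧ G.Adj (f (i + 1)) (f (j + 1)) := by
  obtain ⟨hbull, hdart, hgem, hcyc⟩ := hG
  haveI : NeZero n := ⟨by omega⟩
  -- distinctness of vertices at small index distance
  have key : ∀ (i j : ZMod n) (δ : ℕ), 0 < δ → δ < n → j = i + (δ : ℕ) → f i ≠ f j := by
    intro i j δ h1 h2 hj h
    rw [hj] at h
    have h' := hinj h
    have h'' : ((δ : ℕ) : ZMod n) = 0 := by linear_combination -h'
    have := congrArg ZMod.val h''
    rw [ZMod.val_natCast_of_lt h2, ZMod.val_zero] at this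
    omega
  -- Step 1: there is a short chord, i.e. a triangle on three consecutive vertices.
  obtain ⟨p, hp⟩ : ∃ p : ZMod n, G.Adj (f p) (f (p + 2)) := by
    set T : Set ℕ := {m | 2 ≤ m ∧ m ≤ n - 1 ∧ ∃ q : ZMod n, G.Adj (f q) (f (q + (m : ℕ)))} with hT
    have hTne : (n - 1) ∈ T := by
      refine ⟨by omega, le_rfl, 0, ?_⟩
      have hc : ((n - 1 : ℕ) : ZMod n) = -1 := by
        rw [Nat.cast_sub (by omega : 1 ≤ n), ZMod.natCast_self, Nat.cast_one]; ring
      rw [hc, zero_add]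
      have := hadj (-1)
      rw [show (-1 : ZMod n) + 1 = 0 from by ring] at this
      exact this.symm
    set m := sInf T with hmdef
    obtain ⟨hm2, hmn, q, hq⟩ : m ∈ T := Nat.sInf_mem ⟨n - 1, hTne⟩
    rcases eq_or_lt_of_le hm2 with hm2' | hm3
    · refine ⟨q, ?_⟩
      rw [← hm2'] at hq
      rwa [show (((2 : ℕ) : ℕ) : ZMod n) = 2 from by push_cast; ring] at hq
    · -- m ≥ 3 : the cycle q, q+1, ..., q+m is an induced cycle of length m+1 ≥ 4
      exfalso
      have hchord : ∀ σ τ : ℕ, σ < τ → τ ≤ m →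
          G.Adj (f (q + (σ : ℕ))) (f (q + (τ : ℕ))) → τ - σ = 1 ∨ (σ = 0 ∧ τ = m) := by
        intro σ τ hστ hτm hA
        by_contra hcon
        push_neg at hcon
        have hmem : (τ - σ) ∈ T := by
          refine ⟨by omega, by omega, q + (σ : ℕ), ?_⟩
          have hcast : (((τ - σ : ℕ)) : ZMod n) = ((τ : ℕ) : ZMod n) - ((σ : ℕ) : ZMod n) := by
            rw [Nat.cast_sub hστ.le]
          rw [hcast, show q + (σ : ℕ) + (((τ : ℕ) : ZMod n) - ((σ : ℕ) : ZMod n)) = q + (τ : ℕ) from by ring]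
          exact hA
        have := Nat.sInf_le hmem
        rw [← hmdef] at this
        omega
      have hnm : m + 1 ≤ n := by omega
      set g : Fin (m + 1) → V := fun t => f (q + (t.val : ℕ)) with hg
      apply (hcyc (m + 1) (by omega)).false
      refine embed_of_pattern g ?_ ?_ ?_
      · intro s t h
        have h' := hinj h
        have h'' : ((s.val : ℕ) : ZMod n) = ((t.val : ℕ) : ZMod n) := by
          linear_combination h'
        have := congrArg ZMod.val h''
        rw [ZMod.val_natCast_of_lt (by omega : s.val < n),
          ZMod.val_natCast_of_lt (by omega : t.val < n)] at this
        exact Fin.ext this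
      · intro s t h
        rw [SimpleGraph.cycleGraph_adj'] at h
        rw [fin_sub_val, fin_sub_val] at h
        have hs := s.isLt
        have ht := t.isLt
        have hst : t.val = s.val + 1 ∨ s.val = t.val + 1 ∨ (s.val = 0 ∧ t.val = m) ∨
            (t.val = 0 ∧ s.val = m) := by
          split_ifs at h <;> omega
        rcases hst with h1 | h1 | ⟨h1, h2⟩ | ⟨h1, h2⟩
        · show G.Adj (f (q + (s.val : ℕ))) (f (q + (t.val : ℕ)))
          rw [h1, show (q + ((s.val + 1 : ℕ) : ZMod n)) = (q + (s.val : ℕ)) + 1 from by push_cast; ring]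
          exact hadj _
        · show G.Adj (f (q + (s.val : ℕ))) (f (q + (t.val : ℕ)))
          rw [h1, show (q + ((t.val + 1 : ℕ) : ZMod n)) = (q + (t.val : ℕ)) + 1 from by push_cast; ring]
          exact (hadj _).symm
        · show G.Adj (f (q + (s.val : ℕ))) (f (q + (t.val : ℕ)))
          rw [h1, h2, Nat.cast_zero, add_zero]
          exact hq
        · show G.Adj (f (q + (s.val : ℕ))) (f (q + (t.val : ℕ)))
          rw [h1, h2, Nat.cast_zero, add_zero]
          exact hq.symm
      · intro s t hne hnadj h
        have hs := s.isLt
        have ht := t.isLt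
        rcases lt_trichotomy s.val t.val with hlt | heq | hgt
        · have := hchord s.val t.val hlt (by omega) h
          apply hnadj
          rw [SimpleGraph.cycleGraph_adj', fin_sub_val, fin_sub_val]
          split_ifs <;> omega
        · exact hne (Fin.ext heq)
        · have := hchord t.val s.val hgt (by omega) h.symm
          apply hnadj
          rw [SimpleGraph.cycleGraph_adj', fin_sub_val, fin_sub_val]
          split_ifs <;> omega
  -- Notation for the five-vertex window around the triangle p, p+1, p+2.
  -- E = f (p-1), A = f p, B = f (p+1), C = f (p+2), D = f (p+3)
  have hEA : G.Adj (f (p - 1)) (f p) := by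
    have := hadj (p - 1); rwa [show p - 1 + 1 = p from by ring] at this
  have hAB : G.Adj (f p) (f (p + 1)) := hadj p
  have hBC : G.Adj (f (p + 1)) (f (p + 2)) := by
    have := hadj (p + 1); rwa [show p + 1 + 1 = p + 2 from by ring] at this
  have hCD : G.Adj (f (p + 2)) (f (p + 3)) := by
    have := hadj (p + 2); rwa [show p + 2 + 1 = p + 3 from by ring] at this
  have nEB : f (p - 1) ≠ f (p + 1) := key _ _ 2 (by norm_num) (by omega) (by push_cast; ring)
  have nEC : f (p - 1) ≠ f (p + 2) := key _ _ 3 (by norm_num) (by omega) (by push_cast; ring)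
  have nED : f (p - 1) ≠ f (p + 3) := key _ _ 4 (by norm_num) (by omega) (by push_cast; ring)
  have nAC : f p ≠ f (p + 2) := key _ _ 2 (by norm_num) (by omega) (by push_cast; ring)
  have nAD : f p ≠ f (p + 3) := key _ _ 3 (by norm_num) (by omega) (by push_cast; ring)
  have nBD : f (p + 1) ≠ f (p + 3) := key _ _ 2 (by norm_num) (by omega) (by push_cast; ring)
  have nAB' : f p ≠ f (p + 1) := key _ _ 1 (by norm_num) (by omega) (by push_cast; ring)
  have nBC' : f (p + 1) ≠ f (p + 2) := key _ _ 1 (by norm_num) (by omega) (by push_cast; ring)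
  -- Step 2: find a "ladder": disjoint cycle edges (i,i+1), (j,j+1) with chords i-j and (i+1)-(j+1)
  suffices hlad : ∃ i j : ZMod n,
      f i ≠ f j ∧ f i ≠ f (j + 1) ∧ f (i + 1) ≠ f j ∧ f (i + 1) ≠ f (j + 1) ∧
      G.Adj (f i) (f j) ∧ G.Adj (f (i + 1)) (f (j + 1)) by
    obtain ⟨i, j, m1, m2, m3, m4, l1, l2⟩ := hlad
    by_cases hd1 : G.Adj (f i) (f (j + 1))
    · exact ⟨i, j, m1, m2, m3, m4, hd1, l1, l2⟩
    by_cases hd2 : G.Adj (f (i + 1)) (f j)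
    · exact ⟨j, i, m1.symm, m3.symm, m2.symm, m4.symm, hd2.symm, l1.symm, l2.symm⟩
    · exact absurd (c4_false (f i) (f (i + 1)) (f (j + 1)) (f j) m2 m3 (hadj i) l2
        (hadj j).symm l1.symm hd1 hd2 (hcyc 4 (by norm_num))) not_false
  -- case analysis on the window
  by_cases heb : G.Adj (f (p - 1)) (f (p + 1))
  · -- ladder (p-1, p+1): chords E-B and A-C
    refine ⟨p - 1, p + 1, ?_, ?_, ?_, ?_, ?_, ?_⟩ <;>
      try simp only [show p - 1 + 1 = p from by ring, show p + 1 + 1 = p + 2 from by ring]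
    exacts [nEB, nEC, nAB', nAC, heb, hp]
  by_cases hbd : G.Adj (f (p + 1)) (f (p + 3))
  · -- ladder (p, p+2): chords A-C and B-D
    refine ⟨p, p + 2, ?_, ?_, ?_, ?_, ?_, ?_⟩ <;>
      try simp only [show p + 2 + 1 = p + 3 from by ring]
    exacts [nAC, nAD, nBC', nBD, hp, hbd]
  by_cases hec : G.Adj (f (p - 1)) (f (p + 2)) <;>
    by_cases had : G.Adj (f p) (f (p + 3))
  · -- ladder (p-1, p+2): chords E-C and A-D
    refine ⟨p - 1, p + 2, ?_, ?_, ?_, ?_, ?_, ?_⟩ <;>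
      try simp only [show p - 1 + 1 = p from by ring, show p + 2 + 1 = p + 3 from by ring]
    exacts [nEC, nED, nAC, nAD, hec, had]
  · -- E-C edge, A-D non-edge
    exfalso
    by_cases hed : G.Adj (f (p - 1)) (f (p + 3))
    · -- gem on (B, A, E, D, C)
      exact gem_false (f (p + 1)) (f p) (f (p - 1)) (f (p + 3)) (f (p + 2))
        (fun h => nEB h.symm) nBD nAD
        hAB.symm hEA.symm hed hBC hp hec hCD.symm
        (fun h => heb h.symm) hbd had hgem
    · -- dart on (B, E, C, A, D)
      exact dart_false (f (p + 1)) (f (p - 1)) (f (p + 2)) (f p) (f (p + 3))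
        (fun h => nEB h.symm) nBD nED nAD
        hBC hAB.symm hec hEA hp.symm hCD
        (fun h => heb h.symm) hbd hed had hdart
  · -- A-D edge, E-C non-edge
    exfalso
    by_cases hed : G.Adj (f (p - 1)) (f (p + 3))
    · -- gem on (B, C, D, E, A)
      exact gem_false (f (p + 1)) (f (p + 2)) (f (p + 3)) (f (p - 1)) (f p)
        nBD (fun h => nEB h.symm) (fun h => nEC h.symm)
        hBC hCD hed.symm hAB.symm hp.symm had.symm hEA
        hbd (fun h => heb h.symm) (fun h => hec h.symm) hgem
    · -- dart on (B, D, A, C, E)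
      exact dart_false (f (p + 1)) (f (p + 3)) (f p) (f (p + 2)) (f (p - 1))
        nBD (fun h => nEB h.symm) (fun h => nED h.symm) (fun h => nEC h.symm)
        hAB.symm hBC had.symm hCD.symm hp hEA.symm
        hbd (fun h => heb h.symm) (fun h => hed h.symm) (fun h => hec h.symm) hdart
  · -- neither E-C nor A-D
    exfalso
    by_cases hed : G.Adj (f (p - 1)) (f (p + 3))
    · -- chordless C4 on (E, A, C, D)
      exact c4_false (f (p - 1)) (f p) (f (p + 2)) (f (p + 3)) nEC nAD
        hEA hp hCD hed.symm hec had (hcyc 4 (by norm_num))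
    · -- bull on (B, A, C, E, D)
      exact bull_false (f (p + 1)) (f p) (f (p + 2)) (f (p - 1)) (f (p + 3))
        (fun h => nEB h.symm) nBD nAD (fun h => nEC h.symm) nED
        hAB.symm hBC hp hEA.symm hCD
        (fun h => heb h.symm) hbd had (fun h => hec h.symm) hed hbull
end

section
/- If G is a graph that is a disjoint union of a 3-leaf power component C and a remainder G', then G admits a 3-leaf power edition of size at most k if and only if G' does. -/
open SimpleGraph

/-- `G` admits a 3-leaf power edition of size at most `k`. -/
def Has3LPEdition {V : Type*} (G : SimpleGraph V) (k : ℕ) : Prop :=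
  ∃ F : Finset (Sym2 V), F.card ≤ k ∧ Is3LeafPower (editGraph G ↑F)

/-! An edition of `G` restricts to an edition of `G[Cᶜ]` that is no larger. Conversely, an edition
of `G[Cᶜ]` only touches pairs inside `Cᶜ`, so no edge of the edited `G` joins `C` to `Cᶜ`. Every
forbidden graph is connected, hence an induced copy of it would lie on one side: inside `C` it is a
copy in the 3-leaf power `G[C]`, inside `Cᶜ` one in the edited `G[Cᶜ]`. -/

instance inst_s17 : DecidableRel bull.Adj := by unfold bull; infer_instance
instance inst_s17_2 : DecidableRel dart.Adj := by unfold dart; infer_instance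
instance inst_s17_3 : DecidableRel gem.Adj := by unfold gem; infer_instance

lemma bull_connected : bull.Connected := by decide
lemma dart_connected : dart.Connected := by decide
lemma gem_connected : gem.Connected := by decide

section Edition

variable {V W : Type*}

lemma editGraph_empty (G : SimpleGraph V) : editGraph G ∅ = G := by
  ext u v
  simpa [editGraph] using G.ne_of_adj

lemma comap_editGraph (f : W ↪ V) (G : SimpleGraph V) (F : Set (Sym2 V)) :
    (editGraph G F).comap f = editGraph (G.comap f) (Sym2.map f ⁻¹' F) := by
  ext u v
  simp [editGraph]

lemma induce_editGraph (s : Set V) (G : SimpleGraph V) (F : Set (Sym2 V)) :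
    (editGraph G F).induce s = editGraph (G.induce s) (Sym2.map (↑) ⁻¹' F) :=
  comap_editGraph _ G F

end Edition

section Separated

variable {V W : Type*} {H : SimpleGraph V} {K : SimpleGraph W} {S : Set V}

lemma mem_iff_of_reachable (hS : ∀ x y, H.Adj x y → (x ∈ S ↔ y ∈ S)) {x y : V}
    (h : H.Reachable x y) : x ∈ S ↔ y ∈ S := by
  obtain ⟨p⟩ := h
  induction p with
  | nil => rfl
  | cons hadj _ ih => exact (hS _ _ hadj).trans ih

def SimpleGraph.Embedding.codRestrict (f : K ↪g H) (S : Set V) (hf : ∀ a, f a ∈ S) :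
    K ↪g H.induce S :=
  ⟨⟨fun a => ⟨f a, hf a⟩, fun _ _ hab => f.injective (congrArg Subtype.val hab)⟩, f.map_rel_iff⟩

lemma SimpleGraph.Connected.nonempty_embedding_induce_or (hK : K.Connected)
    (hS : ∀ x y, H.Adj x y → (x ∈ S ↔ y ∈ S)) (f : K ↪g H) :
    Nonempty (K ↪g H.induce S) ∨ Nonempty (K ↪g H.induce Sᶜ) := by
  obtain ⟨a₀⟩ := hK.nonempty
  have hside (a : W) : f a ∈ S ↔ f a₀ ∈ S :=
    mem_iff_of_reachable hS ((hK.preconnected a a₀).map f.toHom)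
  by_cases ha₀ : f a₀ ∈ S
  · exact .inl ⟨f.codRestrict S fun a => (hside a).2 ha₀⟩
  · exact .inr ⟨f.codRestrict Sᶜ fun a => mt (hside a).1 ha₀⟩

lemma SimpleGraph.Connected.isEmpty_embedding_of_separated (hK : K.Connected)
    (hS : ∀ x y, H.Adj x y → (x ∈ S ↔ y ∈ S))
    (h₁ : IsEmpty (K ↪g H.induce S)) (h₂ : IsEmpty (K ↪g H.induce Sᶜ)) : IsEmpty (K ↪g H) :=
  ⟨fun f => (hK.nonempty_embedding_induce_or hS f).elim
    (fun ⟨e⟩ => h₁.false e) (fun ⟨e⟩ => h₂.false e)⟩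

end Separated

section ThreeLeafPower

variable {V W : Type*} {G : SimpleGraph V} {H : SimpleGraph W}

lemma Is3LeafPower.of_embedding (f : G ↪g H) (h : Is3LeafPower H) : Is3LeafPower G :=
  ⟨⟨fun e => h.1.false (f.comp e)⟩, ⟨fun e => h.2.1.false (f.comp e)⟩,
    ⟨fun e => h.2.2.1.false (f.comp e)⟩, fun n hn => ⟨fun e => (h.2.2.2 n hn).false (f.comp e)⟩⟩

lemma Is3LeafPower.induce (h : Is3LeafPower G) (s : Set V) : Is3LeafPower (G.induce s) :=
  h.of_embedding (Embedding.induce s)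

lemma Is3LeafPower.of_separated {S : Set V} (hS : ∀ x y, G.Adj x y → (x ∈ S ↔ y ∈ S))
    (h₁ : Is3LeafPower (G.induce S)) (h₂ : Is3LeafPower (G.induce Sᶜ)) : Is3LeafPower G := by
  refine ⟨bull_connected.isEmpty_embedding_of_separated hS h₁.1 h₂.1,
    dart_connected.isEmpty_embedding_of_separated hS h₁.2.1 h₂.2.1,
    gem_connected.isEmpty_embedding_of_separated hS h₁.2.2.1 h₂.2.2.1, fun n hn => ?_⟩
  obtain ⟨m, rfl⟩ : ∃ m, n = m + 1 := ⟨n - 1, by omega⟩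
  exact cycleGraph_connected.isEmpty_embedding_of_separated hS (h₁.2.2.2 _ hn) (h₂.2.2.2 _ hn)

end ThreeLeafPower

section Component

variable {V : Type*} {G : SimpleGraph V} {C : Set V} {k : ℕ}

lemma Has3LPEdition.induce (h : Has3LPEdition G k) (s : Set V) : Has3LPEdition (G.induce s) k := by
  classical
  obtain ⟨F, hcard, hF⟩ := h
  have hinj : Function.Injective (Sym2.map (Subtype.val : s → V)) :=
    Sym2.map.injective Subtype.val_injective
  refine ⟨F.preimage _ hinj.injOn, (Finset.card_le_card_of_injOn _
    (fun _ he => Finset.mem_preimage.1 he) hinj.injOn).trans hcard, ?_⟩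
  rw [Finset.coe_preimage, ← induce_editGraph]
  exact hF.induce s

lemma Has3LPEdition.of_induce_compl (hsep : ∀ x ∈ C, ∀ y ∉ C, ¬ G.Adj x y)
    (h3 : Is3LeafPower (G.induce C)) (h : Has3LPEdition (G.induce Cᶜ) k) : Has3LPEdition G k := by
  obtain ⟨F', hcard, hF'⟩ := h
  have hinj : Function.Injective (Sym2.map (Subtype.val : ↥Cᶜ → V)) :=
    Sym2.map.injective Subtype.val_injective
  set F := F'.map ⟨_, hinj⟩
  have hFout (e : Sym2 V) (he : e ∈ (F : Set (Sym2 V))) (x : V) (hx : x ∈ e) : x ∉ C := by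
    obtain ⟨e', -, rfl⟩ := Finset.mem_map.1 he
    obtain ⟨y, -, rfl⟩ := Sym2.mem_map.1 hx
    exact y.2
  refine ⟨F, (Finset.card_map _).trans_le hcard, ?_⟩
  have hS (x y : V) (hxy : (editGraph G F).Adj x y) : x ∈ C ↔ y ∈ C := by
    rcases hxy.2 with ⟨hadj, -⟩ | ⟨-, hxyF⟩
    · exact ⟨fun hx => by_contra (hsep x hx y · hadj),
        fun hy => by_contra (hsep y hy x · hadj.symm)⟩
    · exact iff_of_false (hFout _ hxyF x (Sym2.mem_mk_left x y))
        (hFout _ hxyF y (Sym2.mem_mk_right x y))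
  have hinC : Sym2.map (Subtype.val : ↥C → V) ⁻¹' F = ∅ :=
    Set.eq_empty_of_forall_notMem fun e he => by
      induction e using Sym2.ind with
      | _ u v => exact hFout _ he u (Sym2.mem_map.2 ⟨u, Sym2.mem_mk_left u v, rfl⟩) u.2
  have hinCc : Sym2.map (Subtype.val : ↥Cᶜ → V) ⁻¹' F = F' := by
    simp [F, Finset.coe_map, hinj.preimage_image]
  refine Is3LeafPower.of_separated hS ?_ ?_
  · rwa [induce_editGraph, hinC, editGraph_empty]
  · rwa [induce_editGraph, hinCc]

end Component

theorem edition_iff_of_threeLeafPower_component_general {V : Type*} (G : SimpleGraph V) (k : ℕ)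
    (C : Set V)
    (hsep : ∀ x ∈ C, ∀ y ∉ C, ¬ G.Adj x y)
    (h3 : Is3LeafPower (G.induce C)) :
    Has3LPEdition G k ↔ Has3LPEdition (G.induce Cᶜ) k :=
  ⟨fun h => h.induce Cᶜ, Has3LPEdition.of_induce_compl hsep h3⟩

theorem edition_iff_of_threeLeafPower_component {V : Type*} (G : SimpleGraph V) (k : ℕ)
    (C : Set V) (hconn : (G.induce C).Connected)
    (hsep : ∀ x ∈ C, ∀ y ∉ C, ¬ G.Adj x y)
    (h3 : Is3LeafPower (G.induce C)) :
    Has3LPEdition G k ↔ Has3LPEdition (G.induce Cᶜ) k :=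
  edition_iff_of_threeLeafPower_component_general G k C hsep h3
end
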